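/- arXiv:1608.05458 — 8 statements merged into one kernel-verified Lean document; each statement's English description precedes it below -/
import Mathlib

section
/- Given n ≥ 1 pairwise distinct algebraic numbers α₁, …, αₙ ∈ ℂ, the set of integers t ∈ ℤ for which the translated numbers α₁ + t, …, αₙ + t are all nonzero and multiplicatively dependent is finite. -/
/-- The complex numbers `z 0, …, z (n-1)` (assumed nonzero) are multiplicatively
dependent: some nonzero integer vector `k` satisfies `∏ i, z i ^ k i = 1`. -/
def MultDep {n : ℕ} (z : Fin n → ℂ) : Prop :=
  ∃ k : Fin n → ℤ, k ≠ 0 ∧ (∏ i, z i ^ k i) = 1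

/-!
Let `K` be the number field generated by the `αᵢ`, and clear denominators: with `y ∈ ℤ` such
that all `ξᵢ = y αᵢ` are integral, `xᵢ = ξᵢ + y t ∈ 𝓞 K` satisfy `∏ xᵢ ^ kᵢ = y ^ (∑ kᵢ)`.
Pick `i₀` with `|k i₀|` maximal and let `P` be the product of the differences `ξᵢ - ξⱼ`.
At a prime `v`, either `v(x i₀) ≤ v(x j)` for some `j ≠ i₀`, and then
`v(x i₀) ≤ v(x i₀ - x j) ≤ v(P)`; or `x i₀` has strictly the largest valuation, every other
`v(x j)` is at most `v(P)`, and the relation bounds `|k i₀| v(x i₀)` by `n |k i₀| (v(y) + v(P))`.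
So `x i₀` divides the fixed element `(y P) ^ n`, which bounds its norm
`∏_σ |σ ξ_{i₀} + y t|`; this product tends to infinity with `|t|`.
-/

open Finset

theorem WithZero.log_prod {M ι : Type*} [AddCommMonoid M] {s : Finset ι}
    {f : ι → WithZero (Multiplicative M)} (hf : ∀ i ∈ s, f i ≠ 0) :
    log (∏ i ∈ s, f i) = ∑ i ∈ s, log (f i) := by
  classical
  induction s using Finset.induction_on with
  | empty => simp
  | insert j s hj ih =>
    have hs : ∀ i ∈ s, f i ≠ 0 := fun i hi => hf i (mem_insert_of_mem hi)
    rw [prod_insert hj, sum_insert hj, log_mul (hf j (mem_insert_self j s))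
      (prod_ne_zero_iff.2 hs), ih hs]

namespace IsDedekindDomain.HeightOneSpectrum

open WithZero

variable {R : Type*} [CommRing R] [IsDedekindDomain R] (v : HeightOneSpectrum R)

-- junk value: `ord 0 = -log 0 = 0`
noncomputable def ord (r : R) : ℤ := -log (v.intValuation r)

theorem ord_nonneg (r : R) : 0 ≤ v.ord r := by
  obtain rfl | hr := eq_or_ne r 0
  · simp [ord]
  rw [ord, neg_nonneg, log_le_iff_le_exp (v.intValuation_ne_zero r hr), exp_zero]
  exact v.intValuation_le_one r

theorem ord_mul {a b : R} (ha : a ≠ 0) (hb : b ≠ 0) : v.ord (a * b) = v.ord a + v.ord b := by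
  rw [ord, map_mul, log_mul (v.intValuation_ne_zero a ha) (v.intValuation_ne_zero b hb), neg_add,
    ord, ord]

theorem ord_pow (a : R) (n : ℕ) : v.ord (a ^ n) = n * v.ord a := by
  simp [ord, log_pow]

theorem ord_le_ord_of_dvd {a b : R} (hb : b ≠ 0) (h : a ∣ b) : v.ord a ≤ v.ord b := by
  obtain ⟨c, rfl⟩ := h
  rw [v.ord_mul (left_ne_zero_of_mul hb) (right_ne_zero_of_mul hb)]
  exact le_add_of_nonneg_right (v.ord_nonneg c)

theorem min_ord_le_ord_sub {a b : R} (ha : a ≠ 0) (hb : b ≠ 0) (hab : a ≠ b) :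
    min (v.ord a) (v.ord b) ≤ v.ord (a - b) := by
  have hsub := v.intValuation.map_sub a b
  have h0 := v.intValuation_ne_zero (a - b) (sub_ne_zero.2 hab)
  have ha0 := v.intValuation_ne_zero a ha
  have hb0 := v.intValuation_ne_zero b hb
  simp only [ord, min_neg_neg, neg_le_neg_iff]
  rcases le_total (v.intValuation a) (v.intValuation b) with h | h
  · rw [max_eq_right h] at hsub
    exact ((log_le_log h0 hb0).2 hsub).trans (le_max_right _ _)
  · rw [max_eq_left h] at hsub
    exact ((log_le_log h0 ha0).2 hsub).trans (le_max_left _ _)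

theorem intValuation_le_intValuation_iff {a b : R} (ha : a ≠ 0) (hb : b ≠ 0) :
    v.intValuation a ≤ v.intValuation b ↔ v.ord b ≤ v.ord a := by
  rw [ord, ord, neg_le_neg_iff,
    log_le_log (v.intValuation_ne_zero a ha) (v.intValuation_ne_zero b hb)]

theorem sum_mul_ord_sub_eq_zero {K ι : Type*} [Field K] [Algebra R K] [IsFractionRing R K]
    [Fintype ι] {x : ι → R} {d : R} {k : ι → ℤ} (hx : ∀ i, x i ≠ 0) (hd : d ≠ 0)
    (hrel : ∏ i, (algebraMap R K (x i) / algebraMap R K d) ^ k i = 1) :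
    ∑ i, k i * (v.ord (x i) - v.ord d) = 0 := by
  have h := congrArg (fun z => log (v.valuation K z)) hrel
  simp only [map_prod, map_zpow₀, map_div₀, valuation_of_algebraMap, map_one, log_one] at h
  rw [log_prod fun i _ => zpow_ne_zero _ (div_ne_zero (v.intValuation_ne_zero _ (hx i))
    (v.intValuation_ne_zero _ hd))] at h
  simp only [log_zpow, log_div (v.intValuation_ne_zero _ (hx _)) (v.intValuation_ne_zero _ hd),
    smul_eq_mul] at h
  rw [← neg_eq_zero, ← sum_neg_distrib, ← h]
  exact sum_congr rfl fun i _ => by rw [ord, ord]; ring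

theorem dvd_of_forall_ord_le {x z : R} (hx : x ≠ 0)
    (h : ∀ v : HeightOneSpectrum R, v.ord x ≤ v.ord z) : x ∣ z := by
  obtain rfl | hz := eq_or_ne z 0
  · exact dvd_zero x
  obtain ⟨r, hr⟩ := mem_integers_of_valuation_le_one (FractionRing R)
    (algebraMap R (FractionRing R) z / algebraMap R (FractionRing R) x) fun v => by
      rw [map_div₀, valuation_of_algebraMap, valuation_of_algebraMap,
        div_le_one₀ (zero_lt_iff.2 (v.intValuation_ne_zero x hx)),
        v.intValuation_le_intValuation_iff hz hx]
      exact h v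
  refine ⟨r, IsFractionRing.injective R (FractionRing R) ?_⟩
  rw [map_mul, hr, mul_div_cancel₀ _ ((map_ne_zero_iff _ (IsFractionRing.injective R _)).2 hx)]

end IsDedekindDomain.HeightOneSpectrum

theorem Int.le_card_mul_of_sum_mul_sub_eq_zero {ι : Type*} [Fintype ι] {a k : ι → ℤ} {b p : ℤ}
    {i₀ : ι} (ha : ∀ i, 0 ≤ a i) (hb : 0 ≤ b) (hp : 0 ≤ p) (hrel : ∑ i, k i * (a i - b) = 0)
    (hk₀ : k i₀ ≠ 0) (hmax : ∀ j, |k j| ≤ |k i₀|) (hmin : ∀ j ≠ i₀, min (a i₀) (a j) ≤ p) :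
    a i₀ ≤ Fintype.card ι * (b + p) := by
  classical
  have hcard : 1 ≤ Fintype.card ι := Fintype.card_pos_iff.2 ⟨i₀⟩
  have hcard' : (1 : ℤ) ≤ Fintype.card ι := by exact_mod_cast hcard
  by_cases hdom : ∃ j ≠ i₀, a i₀ ≤ a j
  · obtain ⟨j, hj, hle⟩ := hdom
    have := hmin j hj
    rw [min_eq_left hle] at this
    nlinarith
  push Not at hdom
  have hterm : ∀ j ∈ univ.erase i₀, |k j * (a j - b)| ≤ |k i₀| * (b + p) := fun j hj => by
    have hj := ne_of_mem_erase hj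
    have hjp := hmin j hj
    rw [min_eq_right (hdom j hj).le] at hjp
    rw [abs_mul]
    exact mul_le_mul (hmax j) (abs_sub_le_iff.2 ⟨by linarith, by linarith [ha j]⟩)
      (abs_nonneg _) (abs_nonneg _)
  have hsplit : k i₀ * (a i₀ - b) = -∑ j ∈ univ.erase i₀, k j * (a j - b) := by
    rw [← add_sum_erase _ _ (mem_univ i₀)] at hrel
    linarith
  have hbound : |k i₀| * |a i₀ - b| ≤ |k i₀| * ((Fintype.card ι - 1) * (b + p)) :=
    calc |k i₀| * |a i₀ - b| = |∑ j ∈ univ.erase i₀, k j * (a j - b)| := by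
          rw [← abs_mul, hsplit, abs_neg]
      _ ≤ ∑ j ∈ univ.erase i₀, |k j * (a j - b)| := abs_sum_le_sum_abs _ _
      _ ≤ ∑ j ∈ univ.erase i₀, |k i₀| * (b + p) := sum_le_sum hterm
      _ = |k i₀| * ((Fintype.card ι - 1) * (b + p)) := by
          rw [sum_const, card_erase_of_mem (mem_univ _), card_univ, nsmul_eq_mul,
            Nat.cast_sub hcard, Nat.cast_one]
          ring
  have := le_of_mul_le_mul_left hbound (abs_pos.2 hk₀)
  linarith [le_abs_self (a i₀ - b)]

open IsDedekindDomain HeightOneSpectrum in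
theorem dvd_pow_card_of_prod_div_zpow_eq_one {R K ι : Type*} [CommRing R] [IsDedekindDomain R]
    [Field K] [Algebra R K] [IsFractionRing R K] [Fintype ι] {x : ι → R} {d P : R} {k : ι → ℤ}
    {i₀ : ι} (hx : ∀ i, x i ≠ 0) (hd : d ≠ 0) (hP : P ≠ 0)
    (hrel : ∏ i, (algebraMap R K (x i) / algebraMap R K d) ^ k i = 1)
    (hk₀ : k i₀ ≠ 0) (hmax : ∀ j, |k j| ≤ |k i₀|) (hsub : ∀ j ≠ i₀, x i₀ - x j ∣ P) :
    x i₀ ∣ (d * P) ^ Fintype.card ι := by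
  refine dvd_of_forall_ord_le (hx i₀) fun v => ?_
  rw [v.ord_pow, v.ord_mul hd hP]
  refine Int.le_card_mul_of_sum_mul_sub_eq_zero (fun i => v.ord_nonneg _) (v.ord_nonneg _)
    (v.ord_nonneg _) (v.sum_mul_ord_sub_eq_zero hx hd hrel) hk₀ hmax fun j hj => ?_
  have hne : x i₀ ≠ x j := fun h => hP (zero_dvd_iff.1 (sub_eq_zero.2 h ▸ hsub j hj))
  exact (v.min_ord_le_ord_sub (hx i₀) (hx j) hne).trans (v.ord_le_ord_of_dvd hP (hsub j hj))

theorem Complex.finite_setOf_prod_norm_add_intCast_le {ι : Type*} [Fintype ι] [Nonempty ι]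
    (β : ι → ℂ) (B : ℝ) : {t : ℤ | ∏ i, ‖β i + t‖ ≤ B}.Finite := by
  set C := ∑ i, ‖β i‖ + |B| + 1
  refine (Set.finite_Icc (-⌈C⌉) ⌈C⌉).subset fun t ht => ?_
  by_contra hout
  have hbig : C < |(t : ℝ)| := by
    have : ⌈C⌉ < |t| := by
      rw [Set.mem_Icc, not_and_or, not_le, not_le] at hout
      rcases hout with h | h <;> [exact lt_abs.2 (Or.inr (by linarith)); exact lt_abs.2 (Or.inl h)]
    exact (Int.le_ceil C).trans_lt (by exact_mod_cast this)
  have hfac : ∀ i, |B| + 1 ≤ ‖β i + t‖ := fun i => by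
    have h1 := norm_sub_le (β i + t) (β i)
    have h2 : ‖β i‖ ≤ ∑ j, ‖β j‖ := single_le_sum (fun j _ => norm_nonneg (β j)) (mem_univ i)
    rw [add_sub_cancel_left, Complex.norm_intCast] at h1
    linarith
  have hprod : |B| + 1 ≤ ∏ i, ‖β i + t‖ :=
    calc |B| + 1 ≤ (|B| + 1) ^ Fintype.card ι :=
          le_self_pow₀ (by linarith [abs_nonneg B]) Fintype.card_ne_zero
      _ = ∏ _i, (|B| + 1) := (prod_const _).symm
      _ ≤ ∏ i, ‖β i + t‖ := prod_le_prod (fun _ _ => by positivity) fun i _ => hfac i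
  linarith [le_abs_self B, Set.mem_ofPred.1 ht]

open NumberField in
theorem NumberField.RingOfIntegers.finite_setOf_abs_norm_add_intCast_le {K : Type*} [Field K]
    [NumberField K] (ξ : 𝓞 K) (B : ℤ) : {s : ℤ | |Algebra.norm ℤ (ξ + s)| ≤ B}.Finite := by
  have : Nonempty (K →ₐ[ℚ] ℂ) := ⟨IsAlgClosed.lift⟩
  refine (Complex.finite_setOf_prod_norm_add_intCast_le (fun σ : K →ₐ[ℚ] ℂ => σ ξ) B).subset
    fun s hs => ?_
  have h := congrArg norm (Algebra.norm_eq_prod_embeddings ℚ ℂ ((ξ + s : 𝓞 K) : K))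
  rw [← Algebra.coe_norm_int] at h
  simp only [map_add, map_intCast, norm_prod, Complex.norm_intCast] at h
  rw [Set.mem_ofPred]
  convert (show ((|Algebra.norm ℤ (ξ + s)| : ℤ) : ℝ) ≤ B by exact_mod_cast hs) using 1
  rw [Int.cast_abs, h]

open NumberField in
theorem NumberField.finite_setOf_add_intCast_prod_zpow_eq_one {K ι : Type*} [Field K]
    [NumberField K] [Fintype ι] {a : ι → K} (ha : Function.Injective a) :
    {t : ℤ | (∀ i, a i + t ≠ 0) ∧ ∃ k : ι → ℤ, k ≠ 0 ∧ ∏ i, (a i + t) ^ k i = 1}.Finite := by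
  classical
  obtain ⟨y, hy, hint⟩ := exists_integral_multiples ℤ ℚ (univ.image a)
  have hyK : (y : K) ≠ 0 := by exact_mod_cast hy
  let ξ : ι → 𝓞 K := fun i => ⟨y * a i, (mem_integralClosure_iff ℤ K).2
    (by simpa using hint _ (mem_image_of_mem a (mem_univ i)))⟩
  let P : 𝓞 K := ∏ p ∈ univ.offDiag, (ξ p.1 - ξ p.2)
  have hP : P ≠ 0 := prod_ne_zero_iff.2 fun p hp h => (mem_offDiag.1 hp).2.2
    (ha (mul_left_cancel₀ hyK (congrArg ((↑) : 𝓞 K → K) (sub_eq_zero.1 h))))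
  let Θ : 𝓞 K := (y * P) ^ Fintype.card ι
  have hΘ : Algebra.norm ℤ Θ ≠ 0 :=
    Algebra.norm_ne_zero_iff.2 (pow_ne_zero _ (mul_ne_zero (by exact_mod_cast hy) hP))
  refine (Set.finite_iUnion fun i => (RingOfIntegers.finite_setOf_abs_norm_add_intCast_le (ξ i)
    |Algebra.norm ℤ Θ|).preimage (mul_right_injective₀ hy).injOn).subset ?_
  rintro t ⟨hne, k, hk, hprod⟩
  let x : ι → 𝓞 K := fun i => ξ i + ((y * t : ℤ) : 𝓞 K)
  have hxK : ∀ i, algebraMap (𝓞 K) K (x i) = y * (a i + t) := fun i => by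
    change (y : K) * a i + algebraMap (𝓞 K) K ((y * t : ℤ) : 𝓞 K) = _
    rw [map_intCast]
    push_cast
    ring
  have hx : ∀ i, x i ≠ 0 := fun i h => mul_ne_zero hyK (hne i) (by rw [← hxK, h, map_zero])
  obtain ⟨j, hj⟩ := Function.ne_iff.1 hk
  have : Nonempty ι := ⟨j⟩
  obtain ⟨i₀, hmax⟩ := Finite.exists_max fun i => |k i|
  have hk₀ : k i₀ ≠ 0 := fun h => hj (by simpa [h] using hmax j)
  have hdvd : x i₀ ∣ Θ := by
    refine dvd_pow_card_of_prod_div_zpow_eq_one (K := K) hx (by exact_mod_cast hy) hP ?_ hk₀ hmax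
      fun j hji => ?_
    · simpa [hxK, hyK] using hprod
    · rw [add_sub_add_right_eq_sub]
      exact dvd_prod_of_mem (fun p : ι × ι => ξ p.1 - ξ p.2)
        (mem_offDiag.2 ⟨mem_univ _, mem_univ _, hji.symm⟩ : (i₀, j) ∈ univ.offDiag)
  exact Set.mem_iUnion.2 ⟨i₀, Int.le_of_dvd (abs_pos.2 hΘ)
    ((abs_dvd_abs _ _).2 (map_dvd (Algebra.norm ℤ) hdvd))⟩

theorem stmt3_general (n : ℕ) (α : Fin n → ℂ)
    (halg : ∀ i, IsAlgebraic ℚ (α i)) (hinj : Function.Injective α) :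
    {t : ℤ | (∀ i, α i + (t : ℂ) ≠ 0) ∧ MultDep (fun i => α i + (t : ℂ))}.Finite := by
  let K := IntermediateField.adjoin ℚ (Set.range α)
  have : FiniteDimensional ℚ K :=
    IntermediateField.finiteDimensional_adjoin fun _ ⟨i, hi⟩ => hi ▸ (halg i).isIntegral
  have : NumberField K := ⟨⟩
  let a : Fin n → K := fun i => ⟨α i, IntermediateField.subset_adjoin ℚ _ ⟨i, rfl⟩⟩
  have hcoe : ∀ (i) (t : ℤ), algebraMap K ℂ (a i + t) = α i + t := fun i t => by simp [a]
  refine (NumberField.finite_setOf_add_intCast_prod_zpow_eq_one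
    (a := a) fun i j h => hinj (congrArg Subtype.val h)).subset ?_
  rintro t ⟨hne, k, hk, hprod⟩
  refine ⟨fun i h => hne i (by rw [← hcoe, h, map_zero]), k, hk, (algebraMap K ℂ).injective ?_⟩
  simpa [map_prod, map_zpow₀, hcoe] using hprod

theorem stmt3 (n : ℕ) (hn : 1 ≤ n) (α : Fin n → ℂ)
    (halg : ∀ i, IsAlgebraic ℚ (α i)) (hinj : Function.Injective α) :
    {t : ℤ | (∀ i, α i + (t : ℂ) ≠ 0) ∧ MultDep (fun i => α i + (t : ℂ))}.Finite :=
  stmt3_general n α halg hinj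
end

section
/- For every integer d ≥ 3, M(d) = 2·N⁺(d) + 2·N⁻(d) + 4 + δ(d), where δ(d) = 1 if d is even and δ(d) = 0 if d is odd. -/
/-- A pair of integers `(a, b)` is multiplicatively dependent: `ab ≠ 0` and
there is a nonzero pair of integer exponents `(k₁, k₂)` with `a^k₁ * b^k₂ = 1`
(evaluated in `ℚ`). -/
def MultDepPair (a b : ℤ) : Prop :=
  a * b ≠ 0 ∧ ∃ k : ℤ × ℤ, k ≠ 0 ∧ (a : ℚ) ^ k.1 * (b : ℚ) ^ k.2 = 1

/-- `MSet d` is the set of multiplicatively dependent pairs `(a, b) ∈ ℤ²`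
with difference `b - a = d`. -/
def MSet (d : ℤ) : Set (ℤ × ℤ) :=
  {p | MultDepPair p.1 p.2 ∧ p.2 - p.1 = d}

/-- `M d` is the number of multiplicatively dependent pairs with difference `d`. -/
noncomputable def M (d : ℤ) : ℕ := (MSet d).ncard

/-- `g` is a perfect power: `g = a ^ k` with `a ≥ 2`, `k ≥ 2`. -/
def IsPerfectPow (g : ℕ) : Prop := ∃ a k : ℕ, 2 ≤ a ∧ 2 ≤ k ∧ g = a ^ k

/-- `Nplus d` is the number of primitive solutions `(g, x, y)` of `g^y + g^x = d`
with `g ≥ 2` not a perfect power and `y > x ≥ 1`. -/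
noncomputable def Nplus (d : ℕ) : ℕ :=
  {T : ℕ × ℕ × ℕ | 2 ≤ T.1 ∧ 1 ≤ T.2.1 ∧ T.2.1 < T.2.2 ∧ ¬ IsPerfectPow T.1 ∧
    T.1 ^ T.2.2 + T.1 ^ T.2.1 = d}.ncard

/-- `Nminus d` is the number of primitive solutions `(g, x, y)` of `g^y - g^x = d`
with `g ≥ 2` not a perfect power and `y > x ≥ 1`. -/
noncomputable def Nminus (d : ℕ) : ℕ :=
  {T : ℕ × ℕ × ℕ | 2 ≤ T.1 ∧ 1 ≤ T.2.1 ∧ T.2.1 < T.2.2 ∧ ¬ IsPerfectPow T.1 ∧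
    T.1 ^ T.2.2 = T.1 ^ T.2.1 + d}.ncard

/-!
Taking absolute values is injective on the line `b - a = d` (for `d ≠ 0`) and maps it onto the
pairs `(A, B)` of naturals with `B = A + d`, `A = B + d` or `A + B = d`. Two naturals `A, B ≥ 2`
are multiplicatively dependent iff they are powers `g ^ x`, `g ^ y` of one `g` that is not a
perfect power, and then `(g, x, y)` is unique. So, apart from the four pairs with a coordinate
`±1`, `M d` counts the triples `(g, x, y)` with `(g ^ x, g ^ y)` on one of the three lines.
Swapping `x` and `y` matches the triples with `x < y`, which are exactly the solutions counted by
`Nplus d` and `Nminus d`, with those with `x > y`; the triples with `x = y` come from the unique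
representation of `d / 2`.
-/
theorem two_le_and_ne_zero_of_two_le_pow {c n : ℕ} (h : 2 ≤ c ^ n) : 2 ≤ c ∧ n ≠ 0 := by
  refine ⟨?_, by rintro rfl; simp at h⟩
  by_contra! hc
  have : c ^ n ≤ 1 := pow_le_one₀ (Nat.zero_le c) (by omega)
  omega

theorem exists_eq_pow_not_isPerfectPow {n : ℕ} (hn : 2 ≤ n) :
    ∃ g k, 2 ≤ g ∧ ¬IsPerfectPow g ∧ k ≠ 0 ∧ n = g ^ k := by
  induction n using Nat.strong_induction_on with
  | _ n ih =>
    by_cases hn' : IsPerfectPow n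
    · obtain ⟨a, j, ha, hj, rfl⟩ := hn'
      obtain ⟨g, k, hg, hgp, hk, rfl⟩ := ih a (lt_self_pow₀ (by omega) (by omega)) ha
      exact ⟨g, k * j, hg, hgp, by positivity, (pow_mul g k j).symm⟩
    · exact ⟨n, 1, hn, hn', one_ne_zero, (pow_one n).symm⟩

theorem exp_eq_one_of_not_isPerfectPow {g c k : ℕ} (hg : 2 ≤ g) (hgp : ¬IsPerfectPow g)
    (h : g = c ^ k) : k = 1 := by
  obtain ⟨hc, hk⟩ := two_le_and_ne_zero_of_two_le_pow (h ▸ hg)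
  by_contra hk1
  exact hgp ⟨c, k, hc, by omega, h⟩

theorem eq_of_pow_eq_pow_of_not_isPerfectPow {g h x y : ℕ} (hg : 2 ≤ g) (hgp : ¬IsPerfectPow g)
    (hh : 2 ≤ h) (hhp : ¬IsPerfectPow h) (hx : x ≠ 0) (heq : g ^ x = h ^ y) :
    g = h ∧ x = y := by
  obtain ⟨c, hgc, hhc⟩ := Nat.exists_eq_pow_of_pow_eq_pow (Or.inl hx) heq
  rw [exp_eq_one_of_not_isPerfectPow hg hgp hgc, pow_one] at hgc
  rw [exp_eq_one_of_not_isPerfectPow hh hhp hhc, pow_one] at hhc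
  subst hgc hhc
  exact ⟨rfl, Nat.pow_right_injective hg heq⟩

def MultDepNat (A B : ℕ) : Prop :=
  A ≠ 0 ∧ B ≠ 0 ∧ ∃ k : ℕ × ℕ, k ≠ 0 ∧ A ^ k.1 = B ^ k.2

theorem pow_natAbs_eq_of_zpow_mul_zpow_eq_one {A B : ℕ} (hA : A ≠ 0) (hB : B ≠ 0) {m n : ℤ}
    (h : (A : ℚ) ^ m * (B : ℚ) ^ n = 1) : A ^ m.natAbs = B ^ n.natAbs := by
  have hA' : (A : ℚ) ^ m.natAbs ≠ 0 := pow_ne_zero _ (Nat.cast_ne_zero.2 hA)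
  have hB' : (B : ℚ) ^ n.natAbs ≠ 0 := pow_ne_zero _ (Nat.cast_ne_zero.2 hB)
  have of_mul_eq_one :
      (A : ℚ) ^ m.natAbs * (B : ℚ) ^ n.natAbs = 1 → A ^ m.natAbs = B ^ n.natAbs := fun h => by
      obtain ⟨h1, h2⟩ := mul_eq_one.1 (show A ^ m.natAbs * B ^ n.natAbs = 1 by exact_mod_cast h)
      rw [h1, h2]
  -- Each sign case gives either `A ^ |m| = B ^ |n|` or `A ^ |m| * B ^ |n| = 1`.
  rcases Int.natAbs_eq m with hm | hm <;> rcases Int.natAbs_eq n with hn | hn <;>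
    rw [hm, hn] at h <;> simp only [zpow_neg, zpow_natCast] at h
  · exact of_mul_eq_one h
  · exact_mod_cast (mul_inv_eq_one₀ hB').1 h
  · exact_mod_cast (inv_mul_eq_one₀ hA').1 h
  · rw [← mul_inv, inv_eq_one] at h
    exact of_mul_eq_one h

theorem multDepPair_iff (a b : ℤ) : MultDepPair a b ↔ MultDepNat a.natAbs b.natAbs := by
  have habs : ∀ c : ℤ, ((c.natAbs : ℕ) : ℚ) = |(c : ℚ)| := fun c => by
    rw [Nat.cast_natAbs, Int.cast_abs]
  rw [MultDepPair, MultDepNat, mul_ne_zero_iff, and_assoc, Int.natAbs_ne_zero, Int.natAbs_ne_zero]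
  refine and_congr_right fun ha => and_congr_right fun hb => ⟨?_, ?_⟩
  · rintro ⟨k, hk, h⟩
    refine ⟨(k.1.natAbs, k.2.natAbs), by simpa [Prod.ext_iff] using hk, ?_⟩
    apply pow_natAbs_eq_of_zpow_mul_zpow_eq_one (Int.natAbs_ne_zero.2 ha) (Int.natAbs_ne_zero.2 hb)
    simpa only [habs, abs_mul, abs_zpow, abs_one] using congrArg abs h
  · rintro ⟨k, hk, h⟩
    refine ⟨(((2 * k.1 : ℕ) : ℤ), -((2 * k.2 : ℕ) : ℤ)), by simpa [Prod.ext_iff] using hk,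
      ?_⟩
    have hq : (a : ℚ) ^ (2 * k.1) = (b : ℚ) ^ (2 * k.2) := by
      rw [← (even_two_mul k.1).pow_abs, ← (even_two_mul k.2).pow_abs, ← habs, ← habs,
        mul_comm, mul_comm 2, pow_mul, pow_mul]
      exact_mod_cast congrArg (· ^ 2) h
    rw [zpow_neg, zpow_natCast, zpow_natCast, hq]
    exact mul_inv_cancel₀ (pow_ne_zero _ (Int.cast_ne_zero.2 hb))

def absLine (d : ℕ) : Set (ℕ × ℕ) :=
  {p | p.2 = p.1 + d ∨ p.1 = p.2 + d ∨ p.1 + p.2 = d}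

theorem image_natAbs_setOf_sub_eq (d : ℕ) :
    Prod.map Int.natAbs Int.natAbs '' {q : ℤ × ℤ | q.2 - q.1 = d} = absLine d := by
  ext ⟨A, B⟩
  constructor
  · rintro ⟨⟨a, b⟩, h, hab⟩
    simp only [Prod.map, Prod.mk.injEq, Set.mem_ofPred_eq] at h hab
    simp only [absLine, Set.mem_ofPred_eq]
    omega
  · rintro (h | h | h)
    · exact ⟨(A, B), by simp only [Set.mem_ofPred_eq]; omega, rfl⟩
    · exact ⟨(-A, -B), by simp only [Set.mem_ofPred_eq]; omega, by simp⟩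
    · exact ⟨(-A, B), by simp only [Set.mem_ofPred_eq]; omega, by simp⟩

theorem injOn_natAbs_setOf_sub_eq {d : ℤ} (hd : d ≠ 0) :
    Set.InjOn (Prod.map Int.natAbs Int.natAbs) {q : ℤ × ℤ | q.2 - q.1 = d} := by
  rintro ⟨a, b⟩ h ⟨a', b'⟩ h' heq
  simp only [Prod.map, Prod.mk.injEq, Set.mem_ofPred_eq] at h h' heq ⊢
  omega

theorem MSet_eq_preimage_inter (d : ℤ) :
    MSet d =
      Prod.map Int.natAbs Int.natAbs ⁻¹' {p | MultDepNat p.1 p.2} ∩ {q | q.2 - q.1 = d} :=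
  Set.ext fun q => and_congr_left' (multDepPair_iff q.1 q.2)

theorem injOn_natAbs_MSet {d : ℤ} (hd : d ≠ 0) :
    Set.InjOn (Prod.map Int.natAbs Int.natAbs) (MSet d) :=
  (injOn_natAbs_setOf_sub_eq hd).mono fun _ h => h.2

theorem image_natAbs_MSet (d : ℕ) :
    Prod.map Int.natAbs Int.natAbs '' MSet d = {p | MultDepNat p.1 p.2} ∩ absLine d := by
  rw [MSet_eq_preimage_inter, Set.image_preimage_inter, image_natAbs_setOf_sub_eq]

def primitiveTriples : Set (ℕ × ℕ × ℕ) :=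
  {t | 2 ≤ t.1 ∧ ¬IsPerfectPow t.1 ∧ t.2.1 ≠ 0 ∧ t.2.2 ≠ 0}

def powPair (t : ℕ × ℕ × ℕ) : ℕ × ℕ := (t.1 ^ t.2.1, t.1 ^ t.2.2)

theorem powPair_injOn : Set.InjOn powPair primitiveTriples := by
  rintro ⟨g, x, y⟩ ⟨hg, hgp, hx, hy⟩ ⟨h, u, v⟩ ⟨hh, hhp, -, -⟩ heq
  simp only [powPair, Prod.mk.injEq] at heq
  obtain ⟨rfl, rfl⟩ := eq_of_pow_eq_pow_of_not_isPerfectPow hg hgp hh hhp hx heq.1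
  obtain ⟨-, rfl⟩ := eq_of_pow_eq_pow_of_not_isPerfectPow hg hgp hg hgp hy heq.2
  rfl

theorem image_powPair_primitiveTriples :
    powPair '' primitiveTriples = {p | 2 ≤ p.1 ∧ 2 ≤ p.2 ∧ MultDepNat p.1 p.2} := by
  ext ⟨A, B⟩
  constructor
  · rintro ⟨⟨g, x, y⟩, ⟨hg, -, hx, hy⟩, h⟩
    simp only [powPair, Prod.mk.injEq] at h
    obtain ⟨rfl, rfl⟩ := h
    refine ⟨hg.trans (Nat.le_self_pow hx g), hg.trans (Nat.le_self_pow hy g),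
      by positivity, by positivity, (y, x), by simp [hy], ?_⟩
    rw [← pow_mul, ← pow_mul, mul_comm]
  · rintro ⟨hA, hB, -, -, k, hk, h⟩
    obtain ⟨c, rfl, rfl⟩ :=
      Nat.exists_eq_pow_of_pow_eq_pow (not_and_or.1 fun h0 => hk (Prod.ext h0.1 h0.2)) h
    obtain ⟨hc, hkA⟩ := two_le_and_ne_zero_of_two_le_pow hA
    obtain ⟨-, hkB⟩ := two_le_and_ne_zero_of_two_le_pow hB
    obtain ⟨g, j, hg, hgp, hj, rfl⟩ := exists_eq_pow_not_isPerfectPow hc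
    exact ⟨(g, _, _), ⟨hg, hgp, mul_ne_zero hj hkA, mul_ne_zero hj hkB⟩,
      by simp [powPair, pow_mul]⟩

def lineTriples (d : ℕ) : Set (ℕ × ℕ × ℕ) := primitiveTriples ∩ powPair ⁻¹' absLine d

theorem mem_lineTriples {d g x y : ℕ} : (g, x, y) ∈ lineTriples d ↔
    (2 ≤ g ∧ ¬IsPerfectPow g ∧ x ≠ 0 ∧ y ≠ 0) ∧
      (g ^ y = g ^ x + d ∨ g ^ x = g ^ y + d ∨ g ^ x + g ^ y = d) :=
  Iff.rfl

theorem pow_le_of_pow_eq_pow_add {g x y d : ℕ} (hg : 1 < g) (hd : 0 < d)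
    (h : g ^ y = g ^ x + d) : g ^ x ≤ d := by
  have hxy : x ≤ y := (Nat.pow_le_pow_iff_right hg).1 (by omega)
  have hdvd : g ^ x ∣ g ^ x + d := h ▸ Nat.pow_dvd_pow g hxy
  exact Nat.le_of_dvd hd ((Nat.dvd_add_right dvd_rfl).1 hdvd)

theorem finite_image_powPair_lineTriples {d : ℕ} (hd : 0 < d) :
    (powPair '' lineTriples d).Finite := by
  refine (Set.finite_Iic (2 * d, 2 * d)).subset ?_
  rintro _ ⟨⟨g, x, y⟩, ht, rfl⟩
  obtain ⟨⟨hg, -, -, -⟩, hline⟩ := mem_lineTriples.1 ht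
  change (g ^ x, g ^ y) ≤ (2 * d, 2 * d)
  rw [Prod.mk_le_mk]
  rcases hline with h | h | h
  · have := pow_le_of_pow_eq_pow_add hg hd h; omega
  · have := pow_le_of_pow_eq_pow_add hg hd h; omega
  · omega

theorem injOn_powPair_lineTriples (d : ℕ) : Set.InjOn powPair (lineTriples d) :=
  powPair_injOn.mono Set.inter_subset_left

theorem finite_lineTriples {d : ℕ} (hd : 0 < d) : (lineTriples d).Finite :=
  (finite_image_powPair_lineTriples hd).of_finite_image (injOn_powPair_lineTriples d)

theorem ncard_eq_two_mul_ncard_lt_add_ncard_eq {α β : Type*} [LinearOrder β]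
    {S : Set (α × β × β)} (hS : S.Finite) (hswap : ∀ t ∈ S, (t.1, t.2.2, t.2.1) ∈ S) :
    S.ncard = 2 * {t ∈ S | t.2.1 < t.2.2}.ncard + {t ∈ S | t.2.1 = t.2.2}.ncard := by
  set σ : α × β × β → α × β × β := Prod.map id Prod.swap
  have hσ : Function.Involutive σ := fun _ => rfl
  set L := {t ∈ S | t.2.1 < t.2.2}
  set G := {t ∈ S | t.2.2 < t.2.1}
  set D := {t ∈ S | t.2.1 = t.2.2}
  have hG : G = σ '' L := by
    rw [Set.image_eq_preimage_of_inverse hσ.leftInverse hσ.rightInverse]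
    exact Set.ext fun t =>
      ⟨fun ⟨h, hlt⟩ => ⟨hswap t h, hlt⟩, fun ⟨h, hlt⟩ => ⟨hswap _ h, hlt⟩⟩
  have hsplit : S = L ∪ G ∪ D := by
    ext t
    simp only [L, G, D, Set.mem_union, Set.mem_sep_iff]
    have := lt_trichotomy t.2.1 t.2.2
    tauto
  have hLG : Disjoint L G := Set.disjoint_left.2 fun _ h1 h2 => lt_asymm h1.2 h2.2
  have hLGD : Disjoint (L ∪ G) D := Set.disjoint_union_left.2
    ⟨Set.disjoint_left.2 fun _ h1 h2 => h1.2.ne h2.2,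
      Set.disjoint_left.2 fun _ h1 h2 => h1.2.ne' h2.2⟩
  calc S.ncard = (L ∪ G ∪ D).ncard := congrArg Set.ncard hsplit
    _ = 2 * L.ncard + D.ncard := by
      rw [Set.ncard_union_eq hLGD ((hS.sep _).union (hS.sep _)) (hS.sep _),
        Set.ncard_union_eq hLG (hS.sep _) (hS.sep _), hG, hσ.injective.injOn.ncard_image]
      ring

def plusTriples (d : ℕ) : Set (ℕ × ℕ × ℕ) :=
  {T | 2 ≤ T.1 ∧ 1 ≤ T.2.1 ∧ T.2.1 < T.2.2 ∧ ¬ IsPerfectPow T.1 ∧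
    T.1 ^ T.2.2 + T.1 ^ T.2.1 = d}

def minusTriples (d : ℕ) : Set (ℕ × ℕ × ℕ) :=
  {T | 2 ≤ T.1 ∧ 1 ≤ T.2.1 ∧ T.2.1 < T.2.2 ∧ ¬ IsPerfectPow T.1 ∧
    T.1 ^ T.2.2 = T.1 ^ T.2.1 + d}

theorem sep_lineTriples_lt (d : ℕ) :
    {t ∈ lineTriples d | t.2.1 < t.2.2} = plusTriples d ∪ minusTriples d := by
  ext ⟨g, x, y⟩
  simp only [mem_lineTriples, Set.mem_union, plusTriples, minusTriples, Set.mem_ofPred_eq]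
  constructor
  · rintro ⟨⟨⟨hg, hgp, hx, -⟩, hline⟩, hxy⟩
    have := Nat.pow_lt_pow_right hg hxy
    rcases hline with h | h | h
    · exact Or.inr ⟨hg, by omega, hxy, hgp, h⟩
    · omega
    · exact Or.inl ⟨hg, by omega, hxy, hgp, by omega⟩
  · rintro (⟨hg, hx, hxy, hgp, h⟩ | ⟨hg, hx, hxy, hgp, h⟩) <;>
      exact ⟨⟨⟨hg, hgp, by omega, by omega⟩, by omega⟩, hxy⟩

theorem ncard_sep_lineTriples_lt {d : ℕ} (hd : 0 < d) :
    {t ∈ lineTriples d | t.2.1 < t.2.2}.ncard = Nplus d + Nminus d := by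
  have hfin := (finite_lineTriples hd).sep fun t : ℕ × ℕ × ℕ => t.2.1 < t.2.2
  rw [sep_lineTriples_lt] at hfin ⊢
  show _ = (plusTriples d).ncard + (minusTriples d).ncard
  refine Set.ncard_union_eq ?_ (hfin.subset Set.subset_union_left)
    (hfin.subset Set.subset_union_right)
  refine Set.disjoint_left.2 ?_
  rintro t ⟨hg, -, -, -, hplus⟩ ⟨-, -, -, -, hminus⟩
  have : 0 < t.1 ^ t.2.1 := by positivity
  omega

theorem ncard_sep_lineTriples_eq {d : ℕ} (hd : 3 ≤ d) :
    {t ∈ lineTriples d | t.2.1 = t.2.2}.ncard = if Even d then 1 else 0 := by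
  have hdiag : ∀ {g x}, (g, x, x) ∈ lineTriples d ↔
      2 ≤ g ∧ ¬IsPerfectPow g ∧ x ≠ 0 ∧ g ^ x + g ^ x = d := by
    intro g x
    rw [mem_lineTriples]
    constructor
    · rintro ⟨⟨hg, hgp, hx, -⟩, h⟩
      exact ⟨hg, hgp, hx, by omega⟩
    · rintro ⟨hg, hgp, hx, h⟩
      exact ⟨⟨hg, hgp, hx, hx⟩, by omega⟩
  split_ifs with hev
  · obtain ⟨m, rfl⟩ := hev
    obtain ⟨g, k, hg, hgp, hk, hm⟩ := exists_eq_pow_not_isPerfectPow (by omega : 2 ≤ m)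
    refine Set.ncard_eq_one.2 ⟨(g, k, k), Set.ext fun ⟨h, x, y⟩ => ⟨?_, ?_⟩⟩
    · rintro ⟨ht, rfl : x = y⟩
      obtain ⟨hh, hhp, hx, hsum⟩ := hdiag.1 ht
      obtain ⟨rfl, rfl⟩ :=
        eq_of_pow_eq_pow_of_not_isPerfectPow (y := k) hh hhp hg hgp hx (by omega)
      rfl
    · rintro ⟨⟩
      exact ⟨hdiag.2 ⟨hg, hgp, hk, by omega⟩, rfl⟩
  · refine (Set.ncard_eq_zero ((finite_lineTriples (by omega)).sep _)).2
      (Set.eq_empty_of_forall_notMem ?_)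
    rintro ⟨g, x, y⟩ ⟨ht, rfl : x = y⟩
    exact hev ⟨g ^ x, (hdiag.1 ht).2.2.2.symm⟩

theorem ncard_lineTriples {d : ℕ} (hd : 3 ≤ d) :
    (lineTriples d).ncard = 2 * (Nplus d + Nminus d) + if Even d then 1 else 0 := by
  have hswap : ∀ t ∈ lineTriples d, (t.1, t.2.2, t.2.1) ∈ lineTriples d := by
    rintro ⟨g, x, y⟩ ht
    obtain ⟨⟨hg, hgp, hx, hy⟩, hline⟩ := mem_lineTriples.1 ht
    show (g, y, x) ∈ lineTriples d
    exact mem_lineTriples.2 ⟨⟨hg, hgp, hy, hx⟩, by omega⟩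
  rw [ncard_eq_two_mul_ncard_lt_add_ncard_eq (finite_lineTriples (by omega)) hswap,
    ncard_sep_lineTriples_lt (by omega), ncard_sep_lineTriples_eq hd]

def unitPairs (d : ℕ) : Set (ℕ × ℕ) := {(1, d + 1), (1, d - 1), (d + 1, 1), (d - 1, 1)}

theorem ncard_unitPairs {d : ℕ} (hd : 3 ≤ d) : (unitPairs d).ncard = 4 := by
  rw [unitPairs, Set.ncard_eq_toFinset_card']
  simp only [Set.toFinset_insert, Set.toFinset_singleton]
  rw [Finset.card_insert_of_notMem, Finset.card_insert_of_notMem, Finset.card_pair] <;>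
    simp only [Finset.mem_insert, Finset.mem_singleton, ne_eq, Prod.mk.injEq] <;> omega

theorem disjoint_unitPairs_image_powPair (d : ℕ) :
    Disjoint (unitPairs d) (powPair '' primitiveTriples) := by
  rw [image_powPair_primitiveTriples]
  refine Set.disjoint_left.2 ?_
  rintro p hp ⟨h1, h2, -⟩
  simp only [unitPairs, Set.mem_insert_iff, Set.mem_singleton_iff, Prod.ext_iff] at hp
  omega

theorem multDepNat_one_left {B : ℕ} (hB : B ≠ 0) : MultDepNat 1 B :=
  ⟨one_ne_zero, hB, (1, 0), by simp, by simp⟩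

theorem multDepNat_one_right {A : ℕ} (hA : A ≠ 0) : MultDepNat A 1 :=
  ⟨hA, one_ne_zero, (0, 1), by simp, by simp⟩

theorem setOf_multDepNat_inter_absLine {d : ℕ} (hd : 3 ≤ d) :
    {p | MultDepNat p.1 p.2} ∩ absLine d = unitPairs d ∪ powPair '' lineTriples d := by
  rw [lineTriples, Set.image_inter_preimage, image_powPair_primitiveTriples]
  ext ⟨A, B⟩
  simp only [unitPairs, absLine, Set.mem_inter_iff, Set.mem_union, Set.mem_insert_iff,
    Set.mem_singleton_iff, Prod.mk.injEq, Set.mem_ofPred_eq]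
  constructor
  · rintro ⟨hdep, hline⟩
    have hA := hdep.1
    have hB := hdep.2.1
    by_cases hunit : A = 1 ∨ B = 1
    · omega
    · exact Or.inr ⟨⟨by omega, by omega, hdep⟩, hline⟩
  · rintro ((⟨rfl, rfl⟩ | ⟨rfl, rfl⟩ | ⟨rfl, rfl⟩ | ⟨rfl, rfl⟩) |
      ⟨⟨-, -, hdep⟩, hline⟩)
    · exact ⟨multDepNat_one_left (by omega), by omega⟩
    · exact ⟨multDepNat_one_left (by omega), by omega⟩
    · exact ⟨multDepNat_one_right (by omega), by omega⟩
    · exact ⟨multDepNat_one_right (by omega), by omega⟩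
    · exact ⟨hdep, hline⟩

theorem stmt4 (d : ℕ) (hd : 3 ≤ d) :
    M (d : ℤ) = 2 * Nplus d + 2 * Nminus d + 4 + (if Even d then 1 else 0) := by
  have hdisj : Disjoint (unitPairs d) (powPair '' lineTriples d) :=
    (disjoint_unitPairs_image_powPair d).mono_right (Set.image_mono Set.inter_subset_left)
  calc M d = ({p | MultDepNat p.1 p.2} ∩ absLine d).ncard := by
        rw [M, ← (injOn_natAbs_MSet (by omega)).ncard_image, image_natAbs_MSet]
    _ = (unitPairs d).ncard + (lineTriples d).ncard := by
        rw [setOf_multDepNat_inter_absLine hd, Set.ncard_union_eq hdisj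
          (by rw [unitPairs]; exact Set.toFinite _)
          (finite_image_powPair_lineTriples (by omega)),
          (injOn_powPair_lineTriples d).ncard_image]
    _ = _ := by
        rw [ncard_unitPairs hd, ncard_lineTriples hd]
        ring
end

section
/- M(1) = 2, M(2) = 5, and M(2^r) = 7 for every integer r ≥ 2. -/
namespace MultDepPair

theorem symm {a b : ℤ} (h : MultDepPair a b) : MultDepPair b a := by
  obtain ⟨hab, k, hk0, hk⟩ := h
  refine ⟨by rwa [mul_comm], k.swap, fun h0 => hk0 (by simpa using congrArg Prod.swap h0), ?_⟩
  rwa [mul_comm]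

theorem of_pow_eq_pow {a b : ℤ} (hab : a * b ≠ 0) {s t : ℕ} (hst : s ≠ 0 ∨ t ≠ 0)
    (h : a ^ s = b ^ t) : MultDepPair a b := by
  refine ⟨hab, ((s : ℤ), -(t : ℤ)), ?_, ?_⟩
  · simpa [Prod.ext_iff, or_iff_not_imp_left] using hst
  have hb : (b : ℚ) ^ t ≠ 0 := pow_ne_zero _ (by exact_mod_cast right_ne_zero_of_mul hab)
  rw [zpow_neg, zpow_natCast, zpow_natCast, ← div_eq_mul_inv, div_eq_one_iff_eq hb]
  exact_mod_cast h

theorem of_natAbs_pow_eq_pow {a b : ℤ} (hab : a * b ≠ 0) {s t : ℕ} (hst : s ≠ 0 ∨ t ≠ 0)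
    (h : a.natAbs ^ s = b.natAbs ^ t) : MultDepPair a b := by
  refine of_pow_eq_pow hab (s := s * 2) (t := t * 2) (by omega) ?_
  rw [pow_mul, pow_mul, ← Int.natAbs_eq_iff_sq_eq, Int.natAbs_pow, Int.natAbs_pow, h]

theorem dvd_of_dvd {a b : ℤ} (h : MultDepPair a b) (hb : ¬IsUnit b) {p : ℕ} [Fact p.Prime]
    (hpa : (p : ℤ) ∣ a) : (p : ℤ) ∣ b := by
  obtain ⟨hab, k, hk0, hk⟩ := h
  obtain ⟨ha, hb0⟩ := mul_ne_zero_iff.1 hab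
  by_contra hpb
  have hval := congrArg (padicValRat p) hk
  rw [padicValRat.mul (zpow_ne_zero _ (by exact_mod_cast ha))
      (zpow_ne_zero _ (by exact_mod_cast hb0)), padicValRat.zpow, padicValRat.zpow,
    padicValRat.of_int, padicValRat.of_int,
    padicValInt.eq_zero_of_not_dvd hpb, padicValRat.one] at hval
  have hva : 1 ≤ padicValInt p a :=
    ((padicValInt_dvd_iff 1 a).1 (by simpa using hpa)).resolve_left ha
  have hk1 : k.1 = 0 := by
    simp only [Nat.cast_zero, mul_zero, add_zero, mul_eq_zero] at hval
    exact hval.resolve_right (by omega)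
  have hbq : |(b : ℚ)| ≠ 1 := by
    rw [← Int.cast_abs, Ne, Int.cast_eq_one]
    exact mt Int.isUnit_iff_abs_eq.2 hb
  have hk2 : k.2 = 0 := by
    rw [hk1, zpow_zero, one_mul] at hk
    exact (zpow_eq_one_iff_right₀ (abs_nonneg _) hbq).1 (by rw [← abs_zpow, hk, abs_one])
  exact hk0 (Prod.ext hk1 hk2)

theorem exists_natAbs_eq_pow {a b : ℤ} (h : MultDepPair a b) (hb : ¬IsUnit b) {ℓ : ℕ}
    (hcommon : ∀ p : ℕ, p.Prime → (p : ℤ) ∣ a → (p : ℤ) ∣ b → p = ℓ) :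
    ∃ X, a.natAbs = ℓ ^ X := by
  have ha : a.natAbs ≠ 0 := Int.natAbs_ne_zero.2 (left_ne_zero_of_mul h.1)
  refine ⟨_, Nat.eq_prime_pow_of_unique_prime_dvd ha fun {p} hp hpa => ?_⟩
  have : Fact p.Prime := ⟨hp⟩
  have hpa : (p : ℤ) ∣ a := Int.natCast_dvd.2 hpa
  exact hcommon p hp hpa (h.dvd_of_dvd hb hpa)

end MultDepPair

theorem eq_and_eq_succ_of_two_pow_add_two_pow {X Y Z : ℕ} (h : (2 : ℤ) ^ X + 2 ^ Y = 2 ^ Z) :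
    X = Y ∧ Z = X + 1 := by
  wlog hXY : X ≤ Y generalizing X Y
  · obtain ⟨h1, h2⟩ := this (X := Y) (Y := X) (by linarith) (by omega)
    omega
  have hX : (0 : ℤ) < 2 ^ X := by positivity
  have hYZ : Y < Z := (pow_lt_pow_iff_right₀ (one_lt_two : (1 : ℤ) < 2)).1 (by linarith)
  have hZY : Z ≤ Y + 1 := (pow_le_pow_iff_right₀ (one_lt_two : (1 : ℤ) < 2)).1 (by
    rw [pow_succ]; linarith [pow_le_pow_right₀ (one_le_two : (1 : ℤ) ≤ 2) hXY])
  obtain rfl : Z = Y + 1 := by omega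
  have hXY' : (2 : ℤ) ^ X = 2 ^ Y := by rw [pow_succ] at h; linarith
  have := (pow_right_inj₀ two_pos (by norm_num : (2 : ℤ) ≠ 1)).1 hXY'
  omega

theorem eq_of_natAbs_eq_two_pow {a b : ℤ} {X Y n : ℕ} (ha : a.natAbs = 2 ^ X)
    (hb : b.natAbs = 2 ^ Y) (hd : b - a = 2 ^ n) :
    a = 2 ^ n ∨ a = -(2 * 2 ^ n) ∨ b = -a := by
  rcases Int.natAbs_eq_iff.1 ha with rfl | rfl <;>
    rcases Int.natAbs_eq_iff.1 hb with rfl | rfl <;> push_cast at hd ⊢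
  · obtain ⟨rfl, -⟩ := eq_and_eq_succ_of_two_pow_add_two_pow
      (show (2 : ℤ) ^ X + 2 ^ n = 2 ^ Y by linarith)
    exact Or.inl rfl
  · have : (0 : ℤ) < 2 ^ X + 2 ^ Y + 2 ^ n := by positivity
    linarith
  · obtain ⟨rfl, -⟩ := eq_and_eq_succ_of_two_pow_add_two_pow
      (show (2 : ℤ) ^ Y + 2 ^ X = 2 ^ n by linarith)
    simp
  · obtain ⟨rfl, rfl⟩ := eq_and_eq_succ_of_two_pow_add_two_pow
      (show (2 : ℤ) ^ Y + 2 ^ n = 2 ^ X by linarith)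
    exact Or.inr (Or.inl (by ring))

theorem multDepPair_add_two_pow_iff {a : ℤ} {n : ℕ} :
    MultDepPair a (a + 2 ^ n) ↔ a ≠ 0 ∧ a + 2 ^ n ≠ 0 ∧
      (IsUnit a ∨ IsUnit (a + 2 ^ n) ∨ a = 2 ^ n ∨ a = -(2 * 2 ^ n) ∨ a + 2 ^ n = -a) := by
  constructor
  · intro h
    obtain ⟨ha, hb⟩ := mul_ne_zero_iff.1 h.1
    refine ⟨ha, hb, ?_⟩
    by_cases hua : IsUnit a
    · exact Or.inl hua
    by_cases hub : IsUnit (a + 2 ^ n)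
    · exact Or.inr (Or.inl hub)
    have hcommon :
        ∀ p : ℕ, p.Prime → (p : ℤ) ∣ a → (p : ℤ) ∣ a + 2 ^ n → p = 2 := by
      intro p hp hpa hpb
      have : p ∣ 2 ^ n := by exact_mod_cast (dvd_add_right hpa).1 hpb
      exact (Nat.prime_dvd_prime_iff_eq hp Nat.prime_two).1 (hp.dvd_of_dvd_pow this)
    obtain ⟨X, hX⟩ := h.exists_natAbs_eq_pow hub hcommon
    obtain ⟨Y, hY⟩ := h.symm.exists_natAbs_eq_pow hua fun p hp hpb hpa =>
      hcommon p hp hpa hpb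
    exact Or.inr (Or.inr (eq_of_natAbs_eq_two_pow hX hY (by ring)))
  · rintro ⟨ha, hb, h⟩
    have hab : a * (a + 2 ^ n) ≠ 0 := mul_ne_zero ha hb
    rcases h with h | h | rfl | rfl | h
    · refine .of_natAbs_pow_eq_pow hab (s := 1) (t := 0) (by simp) ?_
      simpa [Int.isUnit_iff_natAbs_eq] using h
    · refine .of_natAbs_pow_eq_pow hab (s := 0) (t := 1) (by simp) ?_
      simpa [Int.isUnit_iff_natAbs_eq, eq_comm] using h
    · refine .of_natAbs_pow_eq_pow hab (s := n + 1) (t := n) (by simp) ?_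
      rw [← two_mul, ← pow_succ']
      simp [← pow_mul, mul_comm]
    · refine .of_natAbs_pow_eq_pow hab (s := n) (t := n + 1) (by simp) ?_
      rw [show -(2 * 2 ^ n) + 2 ^ n = -(2 : ℤ) ^ n by ring, ← pow_succ']
      simp [← pow_mul, mul_comm]
    · refine .of_natAbs_pow_eq_pow hab (s := 1) (t := 1) (by simp) ?_
      simp [h]

theorem M_eq_length_of_mem_iff {d : ℤ} {l : List ℤ} (hl : l.Nodup)
    (h : ∀ a, MultDepPair a (a + d) ↔ a ∈ l) : M d = l.length := by
  have hM : MSet d = (fun a => (a, a + d)) '' l.toFinset := by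
    ext ⟨a, b⟩
    simp only [MSet, Set.mem_ofPred_eq, Set.mem_image, Finset.mem_coe, List.mem_toFinset,
      ← h, Prod.mk.injEq]
    constructor
    · rintro ⟨hab, rfl⟩
      exact ⟨a, by simpa using hab, rfl, by ring⟩
    · rintro ⟨a, hab, rfl, rfl⟩
      exact ⟨hab, by ring⟩
  rw [M, hM, Set.ncard_image_of_injective _ fun x y hxy => congrArg Prod.fst hxy,
    Set.ncard_coe_finset, List.toFinset_card_of_nodup hl]

theorem stmt5 : M 1 = 2 ∧ M 2 = 5 ∧ ∀ r : ℕ, 2 ≤ r → M ((2 : ℤ) ^ r) = 7 := by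
  refine ⟨?_, ?_, fun r hr => ?_⟩
  · rw [show (1 : ℤ) = 2 ^ 0 by norm_num, M_eq_length_of_mem_iff (l := [1, -2]) (by decide)]
    · rfl
    intro a
    rw [multDepPair_add_two_pow_iff]
    simp only [Int.isUnit_iff, List.mem_cons, List.not_mem_nil, or_false, pow_zero]
    omega
  · rw [show (2 : ℤ) = 2 ^ 1 by norm_num,
      M_eq_length_of_mem_iff (l := [1, -1, -3, 2, -4]) (by decide)]
    · rfl
    intro a
    rw [multDepPair_add_two_pow_iff]
    simp only [Int.isUnit_iff, List.mem_cons, List.not_mem_nil, or_false, pow_one]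
    omega
  · obtain ⟨s, rfl⟩ : ∃ s, r = s + 2 := ⟨r - 2, by omega⟩
    have hs : (2 : ℤ) ^ (s + 2) = 4 * 2 ^ s := by ring
    have hs1 : (1 : ℤ) ≤ 2 ^ s := one_le_pow₀ one_le_two
    rw [M_eq_length_of_mem_iff (l := [1, -1, 1 - 2 ^ (s + 2), -1 - 2 ^ (s + 2), 2 ^ (s + 2),
      -(2 * 2 ^ (s + 2)), -(2 * 2 ^ s)])]
    · rfl
    · simp only [List.nodup_cons, List.mem_cons, List.not_mem_nil, List.nodup_nil, or_false,
        not_false_eq_true, and_true, hs]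
      omega
    intro a
    rw [multDepPair_add_two_pow_iff]
    simp only [Int.isUnit_iff, List.mem_cons, List.not_mem_nil, or_false, hs]
    omega
end

section
/- For every odd integer d ≥ 3, M(d) = 4; in fact ℳ(d) = {(−d−1,−1), (−d+1,1), (−1,d−1), (1,d+1)}. -/
lemma pm_one_of_pow_eq_one {b : ℤ} {n : ℕ} (hn : n ≠ 0) (h : b ^ n = 1) :
    b = 1 ∨ b = -1 :=
  Int.isUnit_iff.mp (isUnit_of_dvd_one (h ▸ dvd_pow_self b hn))

lemma parity_iff_of_pow_eq {a b : ℤ} {m n : ℕ} (hm : m ≠ 0) (hn : n ≠ 0)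
    (h : a ^ m = b ^ n) : Even a ↔ Even b := by
  constructor
  · intro ha
    have : Even (a ^ m) := Int.even_pow.mpr ⟨ha, hm⟩
    rw [h] at this
    exact (Int.even_pow.mp this).1
  · intro hb
    have : Even (b ^ n) := Int.even_pow.mpr ⟨hb, hn⟩
    rw [← h] at this
    exact (Int.even_pow.mp this).1

lemma key (a b : ℤ) (h : MultDepPair a b) (hodd : Odd (b - a)) :
    a = 1 ∨ a = -1 ∨ b = 1 ∨ b = -1 := by
  obtain ⟨hab, ⟨k1, k2⟩, hk, heq⟩ := h
  have ha : a ≠ 0 := fun h => hab (by simp [h])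
  have hb : b ≠ 0 := fun h => hab (by simp [h])
  have haQ : (a : ℚ) ≠ 0 := by exact_mod_cast ha
  have hbQ : (b : ℚ) ≠ 0 := by exact_mod_cast hb
  have hodd' : ¬ (Even a ↔ Even b) := by
    intro hiff
    exact (Int.not_even_iff_odd.mpr hodd) (Int.even_sub.mpr hiff.symm)
  set m := k1.natAbs with hm
  set n := k2.natAbs with hn
  have hkmn : m ≠ 0 ∨ n ≠ 0 := by
    by_contra hc
    push_neg at hc
    apply hk
    have h1 : k1 = 0 := by omega
    have h2 : k2 = 0 := by omega
    simp [h1, h2, Prod.ext_iff]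
  rcases le_or_gt 0 k1 with h1 | h1 <;> rcases le_or_gt 0 k2 with h2 | h2
  · -- both nonneg : a^m * b^n = 1
    have e1 : k1 = (m : ℤ) := by omega
    have e2 : k2 = (n : ℤ) := by omega
    rw [e1, e2, zpow_natCast, zpow_natCast] at heq
    have hint : a ^ m * b ^ n = 1 := by exact_mod_cast heq
    rcases hkmn with hm0 | hn0
    · have : a ∣ 1 := dvd_trans (dvd_pow_self a hm0) ⟨b ^ n, hint.symm⟩
      rcases Int.isUnit_iff.mp (isUnit_of_dvd_one this) with h | h
      · exact Or.inl h
      · exact Or.inr (Or.inl h)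
    · have : b ∣ 1 := dvd_trans (dvd_pow_self b hn0) ⟨a ^ m, by linarith [hint, mul_comm (a ^ m) (b ^ n)]⟩
      rcases Int.isUnit_iff.mp (isUnit_of_dvd_one this) with h | h
      · exact Or.inr (Or.inr (Or.inl h))
      · exact Or.inr (Or.inr (Or.inr h))
  · -- k1 ≥ 0, k2 < 0 : a^m = b^n, n > 0
    have e1 : k1 = (m : ℤ) := by omega
    have e2 : k2 = -(n : ℤ) := by omega
    have hn0 : n ≠ 0 := by omega
    rw [e1, e2, zpow_natCast, zpow_neg, zpow_natCast] at heq
    have heq2 : (a : ℚ) ^ m = (b : ℚ) ^ n := by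
      field_simp at heq
      linarith [heq]
    have hint : a ^ m = b ^ n := by exact_mod_cast heq2
    rcases Nat.eq_zero_or_pos m with hm0 | hm0
    · rw [hm0, pow_zero] at hint
      rcases pm_one_of_pow_eq_one hn0 hint.symm with h | h
      · exact Or.inr (Or.inr (Or.inl h))
      · exact Or.inr (Or.inr (Or.inr h))
    · exact absurd (parity_iff_of_pow_eq (by omega) hn0 hint) hodd'
  · -- k1 < 0, k2 ≥ 0 : b^n = a^m, m > 0
    have e1 : k1 = -(m : ℤ) := by omega
    have e2 : k2 = (n : ℤ) := by omega
    have hm0 : m ≠ 0 := by omega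
    rw [e1, e2, zpow_natCast, zpow_neg, zpow_natCast] at heq
    have heq2 : (b : ℚ) ^ n = (a : ℚ) ^ m := by
      field_simp at heq
      linarith [heq]
    have hint : b ^ n = a ^ m := by exact_mod_cast heq2
    rcases Nat.eq_zero_or_pos n with hn0 | hn0
    · rw [hn0, pow_zero] at hint
      rcases pm_one_of_pow_eq_one hm0 hint.symm with h | h
      · exact Or.inl h
      · exact Or.inr (Or.inl h)
    · exact absurd (parity_iff_of_pow_eq hm0 (by omega) hint.symm) hodd'
  · -- both neg : (a^m)⁻¹ * (b^n)⁻¹ = 1 ⇒ a^m * b^n = 1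
    have e1 : k1 = -(m : ℤ) := by omega
    have e2 : k2 = -(n : ℤ) := by omega
    have hm0 : m ≠ 0 := by omega
    rw [e1, e2, zpow_neg, zpow_neg, zpow_natCast, zpow_natCast] at heq
    have heq2 : (a : ℚ) ^ m * (b : ℚ) ^ n = 1 := by
      field_simp at heq
      linarith [heq]
    have hint : a ^ m * b ^ n = 1 := by exact_mod_cast heq2
    have : a ∣ 1 := dvd_trans (dvd_pow_self a hm0) ⟨b ^ n, hint.symm⟩
    rcases Int.isUnit_iff.mp (isUnit_of_dvd_one this) with h | h
    · exact Or.inl h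
    · exact Or.inr (Or.inl h)

theorem stmt6 (d : ℤ) (hodd : Odd d) (hd : 3 ≤ d) :
    M d = 4 ∧
    MSet d = ({(-d - 1, -1), (-d + 1, 1), (-1, d - 1), (1, d + 1)} : Set (ℤ × ℤ)) := by
  have hset : MSet d = ({(-d - 1, -1), (-d + 1, 1), (-1, d - 1), (1, d + 1)} : Set (ℤ × ℤ)) := by
    ext ⟨a, b⟩
    simp only [MSet, Set.mem_setOf_eq, Set.mem_insert_iff, Set.mem_singleton_iff, Prod.mk.injEq]
    constructor
    · rintro ⟨hm, hdiff⟩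
      rcases key a b hm (by rw [hdiff]; exact hodd) with rfl | rfl | rfl | rfl
      · right; right; right; omega
      · right; right; left; omega
      · right; left; omega
      · left; omega
    · rintro (⟨rfl, rfl⟩ | ⟨rfl, rfl⟩ | ⟨rfl, rfl⟩ | ⟨rfl, rfl⟩)
      · refine ⟨⟨mul_ne_zero (by omega) (by omega), ⟨(0, 2), by simp [Prod.ext_iff], ?_⟩⟩, by ring⟩
        norm_num
      · refine ⟨⟨mul_ne_zero (by omega) (by omega), ⟨(0, 1), by simp [Prod.ext_iff], ?_⟩⟩, by ring⟩
        norm_num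
      · refine ⟨⟨mul_ne_zero (by omega) (by omega), ⟨(2, 0), by simp [Prod.ext_iff], ?_⟩⟩, by ring⟩
        norm_num
      · refine ⟨⟨mul_ne_zero (by omega) (by omega), ⟨(1, 0), by simp [Prod.ext_iff], ?_⟩⟩, by ring⟩
        norm_num
  refine ⟨?_, hset⟩
  rw [M, hset]
  rw [Set.ncard_insert_of_notMem (by simp [Prod.ext_iff] <;> omega),
      Set.ncard_insert_of_notMem (by simp [Prod.ext_iff] <;> omega),
      Set.ncard_insert_of_notMem (by simp [Prod.ext_iff] <;> omega),
      Set.ncard_singleton]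
end

section
/- Let p ≥ 3 be an odd prime and let r, s be positive integers. Then N⁺(2^r·p^s) = 2 if p = 3, r = 2 and s ∈ {1,2}; N⁺(2^r·p^s) = 1 if p = 3, r ≠ 2 and s ∈ {1,2}; N⁺(2^r·p^s) = 1 if p = 3, r = 2 and s ≥ 3; N⁺(2^r·p^s) = 1 if p ≥ 5 is a Fermat prime and s = 1; N⁺(2^r·p^s) = 1 if p = 2^r − 1 and r ≥ 3; and N⁺(2^r·p^s) = 0 in all other cases. -/
/-- A Fermat prime: a prime of the form `2^m + 1` with `m ≥ 1`. -/
def FermatPrime (p : ℕ) : Prop := p.Prime ∧ ∃ m : ℕ, 1 ≤ m ∧ p = 2 ^ m + 1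

lemma Int.odd_geom_sum₂ {x y : ℤ} {n : ℕ} (hx : Odd x) (hy : Odd y) (hn : Odd n) :
    Odd (∑ i ∈ Finset.range n, x ^ i * y ^ (n - 1 - i)) := by
  rw [← Int.not_even_iff_odd, even_iff_two_dvd]
  refine not_dvd_geom_sum₂ Int.prime_two (hx.sub_odd hy).two_dvd ?_ ?_
  · exact Int.not_even_iff_odd.mpr hx ∘ even_iff_two_dvd.mpr
  · exact_mod_cast Nat.not_even_iff_odd.mpr hn ∘ even_iff_two_dvd.mpr

lemma Int.eq_one_of_odd_of_dvd_two_pow {a : ℤ} {k : ℕ} (ha : Odd a) (ha0 : 0 < a)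
    (h : a ∣ 2 ^ k) : a = 1 := by
  lift a to ℕ using ha0.le
  have hcop : a.Coprime (2 ^ k) := (Nat.coprime_two_right.mpr (by exact_mod_cast ha)).pow_right k
  exact_mod_cast hcop.eq_one_of_dvd (by exact_mod_cast h)

lemma Int.pow_sub_pow_eq_sub_of_eq_two_pow {x y : ℤ} {n k : ℕ} (hx : Odd x) (hy : Odd y)
    (hn : Odd n) (h : x ^ n - y ^ n = 2 ^ k) : x ^ n - y ^ n = x - y := by
  have hxy : y < x := by
    by_contra! hle
    have := hn.strictMono_pow.monotone hle
    have : (0 : ℤ) < 2 ^ k := by positivity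
    linarith
  have hG := geom_sum₂_mul x y n
  have hGpos : 0 < ∑ i ∈ Finset.range n, x ^ i * y ^ (n - 1 - i) :=
    pos_of_mul_pos_left (hG.trans h ▸ by positivity) (sub_pos.mpr hxy).le
  rw [← hG, Int.eq_one_of_odd_of_dvd_two_pow (Int.odd_geom_sum₂ hx hy hn) hGpos
    (h ▸ Dvd.intro _ hG), one_mul]

lemma two_pow_add_two_eq_two_pow_iff {m r : ℕ} : 2 ^ m + 2 = 2 ^ r ↔ m = 1 ∧ r = 2 := by
  refine ⟨fun h => ?_, fun ⟨hm, hr⟩ => by subst hm hr; norm_num⟩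
  obtain rfl : m = 1 := by
    rcases m with _ | _ | m <;> rcases r with _ | _ | r <;> simp [pow_succ] at h ⊢ <;> omega
  exact ⟨rfl, Nat.pow_right_injective le_rfl (show 2 ^ r = 2 ^ 2 by omega)⟩

lemma eq_one_of_pow_add_one_eq_two_pow {a t r : ℕ} (ha : Odd a) (ha1 : 1 < a) (ht : t ≠ 0)
    (h : a ^ t + 1 = 2 ^ r) : t = 1 := by
  rcases Nat.even_or_odd' t with ⟨u, rfl | rfl⟩
  · have hsq : (a ^ u) ^ 2 % 4 = 1 := by
      exact_mod_cast Int.sq_mod_four_eq_one_of_odd (ha.pow (n := u)).natCast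
    have hr : 2 ≤ r := by
      by_contra! hr
      have : 2 ≤ (a ^ u) ^ 2 := Nat.one_lt_pow (by omega) (Nat.one_lt_pow (by omega) ha1)
      interval_cases r <;> rw [pow_mul'] at h <;> omega
    have : 4 ∣ 2 ^ r := (pow_dvd_pow 2 hr : 2 ^ 2 ∣ 2 ^ r)
    rw [pow_mul'] at h
    omega
  · have hto : Odd (2 * u + 1) := odd_two_mul_add_one u
    have h' : (a : ℤ) ^ (2 * u + 1) + 1 = 2 ^ r := by exact_mod_cast h
    have key := Int.pow_sub_pow_eq_sub_of_eq_two_pow (y := -1) (k := r) ha.natCast (by decide) hto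
      (by rw [hto.neg_one_pow]; linear_combination h')
    rw [hto.neg_one_pow] at key
    exact (Nat.pow_eq_self_iff ha1).mp (by exact_mod_cast (by linarith : (a : ℤ) ^ (2 * u + 1) = a))

lemma eq_three_of_sq_eq_two_pow_add_one {q t : ℕ} (h : q ^ 2 = 2 ^ t + 1) : q = 3 := by
  have hfac : (q + 1) * (q - 1) = 2 ^ t := by
    rw [← Nat.sq_sub_sq, one_pow, h, Nat.add_sub_cancel]
  obtain ⟨a, -, ha⟩ := (Nat.dvd_prime_pow Nat.prime_two).mp (Dvd.intro_left _ hfac)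
  obtain ⟨b, -, hb⟩ := (Nat.dvd_prime_pow Nat.prime_two).mp (Dvd.intro _ hfac)
  have hq : 2 ≤ q := by nlinarith [Nat.one_le_two_pow (n := t)]
  obtain ⟨rfl, -⟩ := two_pow_add_two_eq_two_pow_iff.mp (show 2 ^ a + 2 = 2 ^ b by omega)
  omega

lemma eq_one_or_of_two_pow_add_one_eq_pow {p s t : ℕ} (hp : Odd p) (hp1 : 1 < p)
    (h : 2 ^ t + 1 = p ^ s) : s = 1 ∨ p = 3 ∧ s = 2 := by
  rcases Nat.even_or_odd' s with ⟨u, rfl | rfl⟩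
  · have h3 : p ^ u = 3 := eq_three_of_sq_eq_two_pow_add_one (by rw [← pow_mul', h])
    obtain ⟨rfl, rfl⟩ := (Nat.Prime.pow_eq_iff Nat.prime_three).mp h3
    exact Or.inr ⟨rfl, rfl⟩
  · have hto : Odd (2 * u + 1) := odd_two_mul_add_one u
    have h' : (2 : ℤ) ^ t + 1 = p ^ (2 * u + 1) := by exact_mod_cast h
    have key := Int.pow_sub_pow_eq_sub_of_eq_two_pow (y := 1) (k := t) hp.natCast odd_one hto
      (by linear_combination -h')
    rw [one_pow] at key
    exact Or.inl <| (Nat.pow_eq_self_iff hp1).mp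
      (by exact_mod_cast (by linarith : (p : ℤ) ^ (2 * u + 1) = p))

lemma Nat.Prime.not_isPerfectPow {q : ℕ} (hq : q.Prime) : ¬IsPerfectPow q := by
  rintro ⟨a, k, -, hk, rfl⟩
  have := Nat.Prime.eq_one_of_pow hq
  omega

lemma eq_of_dvd_prime_pow_of_not_isPerfectPow {q g n : ℕ} (hq : q.Prime) (hg : 2 ≤ g)
    (hgn : ¬IsPerfectPow g) (h : g ∣ q ^ n) : g = q := by
  obtain ⟨k, -, rfl⟩ := (Nat.dvd_prime_pow hq).mp h
  rcases k with _ | _ | k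
  · simp at hg
  · exact pow_one q
  · exact absurd ⟨q, k + 2, hq.two_le, by omega, rfl⟩ hgn

lemma eq_and_eq_of_pow_mul_eq_pow_mul {q m n a b : ℕ} (hq : q.Prime) (ha : ¬q ∣ a)
    (hb : ¬q ∣ b) (h : q ^ m * a = q ^ n * b) : m = n ∧ a = b := by
  have := Fact.mk hq
  obtain rfl : m = n := by
    have := congrArg (padicValNat q) h
    rwa [padicValNat.mul (pow_ne_zero _ hq.ne_zero) (by rintro rfl; simp at ha),
      padicValNat.mul (pow_ne_zero _ hq.ne_zero) (by rintro rfl; simp at hb),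
      padicValNat.prime_pow, padicValNat.prime_pow, padicValNat.eq_zero_of_not_dvd ha,
      padicValNat.eq_zero_of_not_dvd hb, add_zero, add_zero] at this
  exact ⟨rfl, Nat.eq_of_mul_eq_mul_left (pow_pos hq.pos _) h⟩

lemma eq_two_or_eq_of_pow_mul_pow_add_one_eq {p g x t r s : ℕ} (hp : p.Prime) (hg : 2 ≤ g)
    (hgn : ¬IsPerfectPow g) (hx : x ≠ 0) (ht : t ≠ 0) (h : g ^ x * (g ^ t + 1) = 2 ^ r * p ^ s) :
    g = 2 ∨ g = p := by
  have hdvd : g ∣ 2 ^ r * p ^ s := h ▸ (dvd_pow_self g hx).mul_right _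
  by_cases h2 : 2 ∣ g
  · have hpg : ¬p ∣ g := by
      intro hpg
      have hcop : Nat.Coprime (g ^ t + 1) (g ^ t) :=
        Nat.coprime_self_add_left.mpr (Nat.coprime_one_left _)
      have hcop' : Nat.Coprime (g ^ t + 1) (2 ^ r * p ^ s) :=
        Nat.Coprime.mul_right ((hcop.coprime_dvd_right (h2.trans (dvd_pow_self g ht))).pow_right r)
          ((hcop.coprime_dvd_right (hpg.trans (dvd_pow_self g ht))).pow_right s)
      have := hcop'.eq_one_of_dvd (Dvd.intro_left _ h)
      have := pow_pos (show 0 < g by omega) t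
      omega
    exact Or.inl <| eq_of_dvd_prime_pow_of_not_isPerfectPow Nat.prime_two hg hgn
      ((((Nat.Prime.coprime_iff_not_dvd hp).mpr hpg).symm.pow_right s).dvd_of_dvd_mul_right hdvd)
  · exact Or.inr <| eq_of_dvd_prime_pow_of_not_isPerfectPow hp hg hgn
      ((((Nat.Prime.coprime_iff_not_dvd Nat.prime_two).mpr h2).symm.pow_right r).dvd_of_dvd_mul_left
        hdvd)

lemma solutions_two_pow_mul_prime_pow {p r s : ℕ} (hp : p.Prime) (hpodd : Odd p) (hr : 1 ≤ r)
    (hs : 1 ≤ s) :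
    {T : ℕ × ℕ × ℕ | 2 ≤ T.1 ∧ 1 ≤ T.2.1 ∧ T.2.1 < T.2.2 ∧ ¬ IsPerfectPow T.1 ∧
      T.1 ^ T.2.2 + T.1 ^ T.2.1 = 2 ^ r * p ^ s} =
      (fun t => (2, r, r + t)) '' {t | 2 ^ t + 1 = p ^ s} ∪
        {T | p + 1 = 2 ^ r ∧ T = (p, s, s + 1)} := by
  have hp2 : ¬p ∣ 2 ^ r := fun h => hpodd.not_two_dvd_nat
    ((Nat.prime_dvd_prime_iff_eq hp Nat.prime_two).mp (hp.dvd_of_dvd_pow h) ▸ dvd_rfl)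
  ext ⟨g, x, y⟩
  simp only [Set.mem_ofPred_eq, Set.mem_union, Set.mem_image, Prod.mk.injEq]
  constructor
  · rintro ⟨hg, hx, hxy, hgn, h⟩
    obtain ⟨t, rfl⟩ := Nat.exists_eq_add_of_lt hxy
    have hfac : g ^ x * (g ^ (t + 1) + 1) = 2 ^ r * p ^ s := by rw [← h]; ring
    rcases eq_two_or_eq_of_pow_mul_pow_add_one_eq hp hg hgn (by omega) (by omega) hfac
      with rfl | rfl
    · obtain ⟨rfl, he⟩ := eq_and_eq_of_pow_mul_eq_pow_mul Nat.prime_two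
        (Nat.even_pow.mpr ⟨even_two, t.succ_ne_zero⟩).add_one.not_two_dvd_nat
        hpodd.pow.not_two_dvd_nat hfac
      exact Or.inl ⟨t + 1, he, rfl, rfl, by ring⟩
    · rw [mul_comm (2 ^ r)] at hfac
      obtain ⟨rfl, he⟩ := eq_and_eq_of_pow_mul_eq_pow_mul hp (fun h => hp.one_lt.ne'
        (Nat.dvd_one.mp ((Nat.dvd_add_right (dvd_pow_self g t.succ_ne_zero)).mp h))) hp2 hfac
      obtain rfl : t = 0 := by
        have := eq_one_of_pow_add_one_eq_two_pow hpodd hp.one_lt t.succ_ne_zero he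
        omega
      exact Or.inr ⟨by simpa using he, rfl, rfl, rfl⟩
  · rintro (⟨t, ht, rfl, rfl, rfl⟩ | ⟨hpr, rfl, rfl, rfl⟩)
    · have : t ≠ 0 := by
        rintro rfl
        exact hpodd.pow.not_two_dvd_nat (by rw [← ht]; norm_num)
      refine ⟨le_rfl, hr, by omega, Nat.prime_two.not_isPerfectPow, ?_⟩
      rw [pow_add, ← ht]; ring
    · refine ⟨hp.two_le, hs, by omega, hp.not_isPerfectPow, ?_⟩
      rw [pow_succ, ← hpr]; ring

lemma two_pow_add_one_injective : Function.Injective fun t : ℕ => 2 ^ t + 1 :=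
  (add_left_injective 1).comp (Nat.pow_right_injective le_rfl)

open Classical in
lemma ncard_setOf_two_pow_add_one_eq (N : ℕ) :
    {t | 2 ^ t + 1 = N}.ncard = if ∃ t, 2 ^ t + 1 = N then 1 else 0 := by
  split_ifs with h
  · obtain ⟨t₀, rfl⟩ := h
    exact Set.ncard_eq_one.mpr ⟨t₀, Set.ext fun t =>
      ⟨fun ht => two_pow_add_one_injective ht, fun ht => congrArg (2 ^ · + 1) ht⟩⟩
  · have : {t | 2 ^ t + 1 = N} = ∅ := Set.eq_empty_of_forall_notMem fun t ht => h ⟨t, ht⟩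
    rw [this, Set.ncard_empty]

lemma Set.ncard_setOf_and_eq {α : Type*} (P : Prop) [Decidable P] (a : α) :
    {x | P ∧ x = a}.ncard = if P then 1 else 0 := by
  split_ifs with h <;> simp [h]

open Classical in
lemma nplus_two_pow_mul_prime_pow {p r s : ℕ} (hp : p.Prime) (hpodd : Odd p) (hr : 1 ≤ r)
    (hs : 1 ≤ s) : Nplus (2 ^ r * p ^ s) =
      (if ∃ t, 2 ^ t + 1 = p ^ s then 1 else 0) + (if p + 1 = 2 ^ r then 1 else 0) := by
  have hfin : {t | 2 ^ t + 1 = p ^ s}.Finite :=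
    Set.Subsingleton.finite fun a ha b hb => two_pow_add_one_injective (ha.trans hb.symm)
  have hdisj : Disjoint ((fun t => (2, r, r + t)) '' {t | 2 ^ t + 1 = p ^ s})
      {T | p + 1 = 2 ^ r ∧ T = (p, s, s + 1)} := by
    refine Set.disjoint_left.mpr ?_
    rintro _ ⟨t, -, rfl⟩ ⟨-, h⟩
    simp only [Prod.mk.injEq] at h
    exact hpodd.not_two_dvd_nat (h.1 ▸ dvd_rfl)
  rw [Nplus, solutions_two_pow_mul_prime_pow hp hpodd hr hs,
    Set.ncard_union_eq hdisj (hfin.image _) ((Set.finite_singleton _).subset fun T hT => hT.2),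
    Set.ncard_image_of_injective _ fun a b h => by simpa using h, ncard_setOf_two_pow_add_one_eq,
    Set.ncard_setOf_and_eq]

lemma exists_two_pow_add_one_eq_prime_pow_iff {p s : ℕ} (hp : p.Prime) (hpodd : Odd p) :
    (∃ t, 2 ^ t + 1 = p ^ s) ↔ p = 3 ∧ (s = 1 ∨ s = 2) ∨ 5 ≤ p ∧ FermatPrime p ∧ s = 1 := by
  constructor
  · rintro ⟨t, ht⟩
    rcases eq_one_or_of_two_pow_add_one_eq_pow hpodd hp.one_lt ht with rfl | ⟨rfl, rfl⟩
    · rw [pow_one] at ht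
      rcases t with _ | _ | t
      · exact absurd (ht ▸ hpodd) (by decide)
      · exact Or.inl ⟨by simp [← ht], Or.inl rfl⟩
      · refine Or.inr ⟨?_, ⟨hp, t + 2, by omega, ht.symm⟩, rfl⟩
        rw [← ht, pow_succ, pow_succ]
        have := t.one_le_two_pow
        omega
    · exact Or.inl ⟨rfl, Or.inr rfl⟩
  · rintro (⟨rfl, rfl | rfl⟩ | ⟨-, ⟨-, m, -, rfl⟩, rfl⟩)
    exacts [⟨1, rfl⟩, ⟨3, rfl⟩, ⟨m, by simp⟩]

theorem stmt9 (p r s : ℕ) (hp : p.Prime) (hp3 : 3 ≤ p) (hpodd : Odd p)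
    (hr : 1 ≤ r) (hs : 1 ≤ s) :
    (p = 3 ∧ r = 2 ∧ (s = 1 ∨ s = 2) → Nplus (2 ^ r * p ^ s) = 2) ∧
    (p = 3 ∧ r ≠ 2 ∧ (s = 1 ∨ s = 2) → Nplus (2 ^ r * p ^ s) = 1) ∧
    (p = 3 ∧ r = 2 ∧ 3 ≤ s → Nplus (2 ^ r * p ^ s) = 1) ∧
    (5 ≤ p ∧ FermatPrime p ∧ s = 1 → Nplus (2 ^ r * p ^ s) = 1) ∧
    (p + 1 = 2 ^ r ∧ 3 ≤ r → Nplus (2 ^ r * p ^ s) = 1) ∧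
    (¬(p = 3 ∧ r = 2 ∧ (s = 1 ∨ s = 2)) ∧
     ¬(p = 3 ∧ r ≠ 2 ∧ (s = 1 ∨ s = 2)) ∧
     ¬(p = 3 ∧ r = 2 ∧ 3 ≤ s) ∧
     ¬(5 ≤ p ∧ FermatPrime p ∧ s = 1) ∧
     ¬(p + 1 = 2 ^ r ∧ 3 ≤ r) → Nplus (2 ^ r * p ^ s) = 0) := by
  have hp35 : p = 3 ∨ 5 ≤ p := by
    obtain ⟨k, rfl⟩ := hpodd
    omega
  have hthree : p = 3 → (p + 1 = 2 ^ r ↔ r = 2) := by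
    rintro rfl
    simpa using two_pow_add_two_eq_two_pow_iff (m := 1) (r := r)
  have hmersenne : 5 ≤ p → p + 1 = 2 ^ r → 3 ≤ r := by
    intro h5 h
    by_contra! hr3
    interval_cases r <;> omega
  have hfermat : 5 ≤ p → FermatPrime p → p + 1 ≠ 2 ^ r := by
    rintro h5 ⟨-, m, -, rfl⟩ h
    obtain ⟨rfl, -⟩ := two_pow_add_two_eq_two_pow_iff.mp h
    omega
  rw [nplus_two_pow_mul_prime_pow hp hpodd hr hs, exists_two_pow_add_one_eq_prime_pow_iff hp hpodd]
  split_ifs <;> grind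
end

section
/- Let p ≥ 3 be an odd prime and let r, s be positive integers. Then N⁻(2^r·p^s) = 2 if p = 3, s = 1 and r ∈ {1,3}; N⁻(2^r·p^s) = 1 if p = 3, s = 1 and r ∉ {1,3}; N⁻(2^r·p^s) = 1 if p = 3, s ≥ 2 and r ∈ {1,3}; N⁻(2^r·p^s) = 1 if p ≥ 7 is a Mersenne prime and s = 1; N⁻(2^r·p^s) = 1 if p = 2^r + 1 and r ≥ 2; and N⁻(2^r·p^s) = 0 in all other cases. -/
/-- A Mersenne prime: a prime of the form `2^m - 1` with `m ≥ 1`. -/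
def MersennePrime (p : ℕ) : Prop := p.Prime ∧ ∃ m : ℕ, 1 ≤ m ∧ p + 1 = 2 ^ m



lemma not_pp_prime {p : ℕ} (hp : p.Prime) : ¬ IsPerfectPow p := by
  rintro ⟨a, k, ha, hk, rfl⟩
  exact Nat.Prime.not_prime_pow hk hp

lemma two_pow_inj {m k : ℕ} (h : (2:ℕ)^m = 2^k) : m = k :=
  Nat.pow_right_injective (by norm_num) h

lemma oddQ (c e : ℤ) (n : ℕ) (hc : Odd c) (he : e = 1 ∨ e = -1) (hn : Odd n) :
    ∃ Q : ℤ, Odd Q ∧ Q * (c - e) = c ^ n - e ^ n := by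
  refine ⟨_, ?_, geom_sum₂_mul c e n⟩
  rw [← Int.not_even_iff_odd]
  intro hev
  have h2 : ((∑ i ∈ Finset.range n, c ^ i * e ^ (n - 1 - i) : ℤ) : ZMod 2) = 0 := by
    have := (ZMod.intCast_zmod_eq_zero_iff_dvd
      (∑ i ∈ Finset.range n, c ^ i * e ^ (n - 1 - i)) 2).mpr (by exact_mod_cast hev.two_dvd)
    exact this
  have hc2 : ((c : ℤ) : ZMod 2) = 1 := by
    obtain ⟨k, hk⟩ := hc
    subst hk
    push_cast
    rw [show ((2:ZMod 2)) = 0 by decide]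
    ring
  have he2 : ((e : ℤ) : ZMod 2) = 1 := by
    rcases he with rfl | rfl <;> push_cast <;> decide
  rw [Int.cast_sum] at h2
  simp only [Int.cast_mul, Int.cast_pow, hc2, he2, one_pow, one_mul,
    Finset.sum_const, Finset.card_range, nsmul_eq_mul, mul_one] at h2
  have hn2 : ((n : ℕ) : ZMod 2) = 1 := by
    obtain ⟨k, hk⟩ := hn
    subst hk
    push_cast
    rw [show ((2:ZMod 2)) = 0 by decide]
    ring
  rw [hn2] at h2
  exact one_ne_zero h2

lemma odd_dvd_two_pow {n t : ℕ} (hodd : Odd n) (h : n ∣ 2 ^ t) : n = 1 := by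
  obtain ⟨k, hk, rfl⟩ := (Nat.dvd_prime_pow Nat.prime_two).mp h
  cases k with
  | zero => rfl
  | succ k =>
    exact absurd (Nat.even_pow.mpr ⟨even_two, by omega⟩) (Nat.not_even_iff_odd.mpr hodd)

lemma natAbs_dvd_two_pow {Q : ℤ} {t : ℕ} (h : Q ∣ (2:ℤ) ^ t) : Q.natAbs ∣ 2 ^ t := by
  have := Int.natAbs_dvd_natAbs.mpr h
  rwa [Int.natAbs_pow, show (2:ℤ).natAbs = 2 from rfl] at this

lemma L1 {p s t : ℕ} (hp3 : 3 ≤ p) (hpodd : Odd p) (hs : 1 ≤ s)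
    (h : 2 ^ t = p ^ s + 1) : s = 1 ∧ p + 1 = 2 ^ t := by
  have hps : 3 ≤ p ^ s := le_trans hp3 (Nat.le_self_pow (by omega) p)
  rcases Nat.even_or_odd s with hse | hso
  · exfalso
    obtain ⟨u, hu⟩ := hse
    have hpu : Odd (p ^ u) := hpodd.pow
    obtain ⟨k, hk⟩ := hpu
    have hsq : p ^ s = (p ^ u) * (p ^ u) := by rw [hu, ← pow_add]
    have h4 : p ^ s % 4 = 1 := by rw [hsq, hk]; ring_nf; omega
    have ht2 : 2 ≤ t := by
      by_contra hlt
      interval_cases t <;> omega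
    have : 4 ∣ 2 ^ t :=
      ⟨2 ^ (t - 2), by rw [show t = 2 + (t - 2) by omega, pow_add]; norm_num⟩
    omega
  · obtain ⟨Q, hQodd, hQ⟩ := oddQ p (-1) s (by exact_mod_cast hpodd) (Or.inr rfl) hso
    rw [hso.neg_one_pow] at hQ
    have hZ : ((2:ℤ)) ^ t = (p:ℤ) ^ s + 1 := by exact_mod_cast h
    have hQ' : Q * ((p : ℤ) + 1) = (2 : ℤ) ^ t := by
      rw [show ((p:ℤ) + 1) = (p:ℤ) - (-1) by ring, hQ]; linarith
    have hp3' : (3:ℤ) ≤ (p:ℤ) := by exact_mod_cast hp3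
    have hQpos : 0 < Q := by
      rcases lt_trichotomy Q 0 with hneg | rfl | hpos
      · nlinarith [pow_pos (show (0:ℤ) < 2 by norm_num) t]
      · nlinarith [pow_pos (show (0:ℤ) < 2 by norm_num) t]
      · exact hpos
    have hQ1 : Q.natAbs = 1 :=
      odd_dvd_two_pow (Int.natAbs_odd.mpr hQodd) (natAbs_dvd_two_pow ⟨_, hQ'.symm⟩)
    have hQe : Q = 1 := by omega
    subst hQe
    rw [one_mul] at hQ'
    have hpt : p + 1 = 2 ^ t := by exact_mod_cast hQ'
    have hps1 : p ^ s = p := by omega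
    exact ⟨Nat.pow_right_injective (show 2 ≤ p by omega) (hps1.trans (pow_one p).symm), hpt⟩

lemma L2 {p r t : ℕ} (hp3 : 3 ≤ p) (hpodd : Odd p) (ht : 1 ≤ t)
    (h : p ^ t = 2 ^ r + 1) : t = 1 ∨ (p = 3 ∧ t = 2 ∧ r = 3) := by
  rcases Nat.even_or_odd t with hte | hto
  · right
    obtain ⟨u, hu⟩ := hte
    have hu1 : 1 ≤ u := by omega
    have hm3 : 3 ≤ p ^ u := le_trans hp3 (Nat.le_self_pow (by omega) p)
    have hmodd : Odd (p ^ u) := hpodd.pow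
    set m := p ^ u with hm
    have hmm : m * m = 2 ^ r + 1 := by rw [hm, ← pow_add, ← hu, h]
    have hsq : (m - 1) * (m + 1) = 2 ^ r := by
      have hz : (m:ℤ) * m = 2 ^ r + 1 := by exact_mod_cast hmm
      zify [show (1:ℕ) ≤ m by omega]
      linear_combination hz
    have hd1 : (m - 1) ∣ 2 ^ r := ⟨m + 1, hsq.symm⟩
    have hd2 : (m + 1) ∣ 2 ^ r := ⟨m - 1, by rw [mul_comm]; exact hsq.symm⟩
    obtain ⟨i, hi, hie⟩ := (Nat.dvd_prime_pow Nat.prime_two).mp hd1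
    obtain ⟨j, hj, hje⟩ := (Nat.dvd_prime_pow Nat.prime_two).mp hd2
    have hji : 2 ^ j = 2 ^ i + 2 := by omega
    have hi1 : 1 ≤ i := by
      rcases Nat.eq_zero_or_pos i with rfl | h
      · simp at hie; omega
      · omega
    have hieq : i = 1 := by
      by_contra hne
      have hi2 : 2 ≤ i := by omega
      have h4i : 4 ∣ 2 ^ i :=
        ⟨2 ^ (i - 2), by rw [show i = 2 + (i-2) by omega, pow_add]; norm_num⟩
      have hj3 : 3 ≤ j := by
        by_contra hjlt
        interval_cases j <;> omega
      have h4j : 4 ∣ 2 ^ j :=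
        ⟨2 ^ (j - 2), by rw [show j = 2 + (j-2) by omega, pow_add]; norm_num⟩
      omega
    subst hieq
    have hm3' : m = 3 := by omega
    have hu1' : u = 1 := by
      by_contra hne
      have h2u : 2 ≤ u := by omega
      have hle : p ^ 2 ≤ p ^ u := Nat.pow_le_pow_right (by omega) h2u
      have h9 : 3 ^ 2 ≤ p ^ 2 := Nat.pow_le_pow_left hp3 2
      omega
    have hpe : p = 3 := by rw [hm, hu1', pow_one] at hm3'; exact hm3'
    have hre : r = 3 := by
      have h8 : (2:ℕ) ^ 3 = 2 ^ r := by rw [← hsq, hm3']; norm_num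
      exact (two_pow_inj h8).symm
    exact ⟨hpe, by omega, hre⟩
  · left
    obtain ⟨Q, hQodd, hQ⟩ := oddQ p 1 t (by exact_mod_cast hpodd) (Or.inl rfl) hto
    rw [one_pow] at hQ
    have hZ : ((p:ℤ)) ^ t = (2:ℤ) ^ r + 1 := by exact_mod_cast h
    have hQ' : Q * ((p : ℤ) - 1) = (2 : ℤ) ^ r := by rw [hQ]; linarith
    have hp3' : (3:ℤ) ≤ (p:ℤ) := by exact_mod_cast hp3
    have hQpos : 0 < Q := by
      rcases lt_trichotomy Q 0 with hneg | rfl | hpos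
      · nlinarith [pow_pos (show (0:ℤ) < 2 by norm_num) r]
      · nlinarith [pow_pos (show (0:ℤ) < 2 by norm_num) r]
      · exact hpos
    have hQ1 : Q.natAbs = 1 :=
      odd_dvd_two_pow (Int.natAbs_odd.mpr hQodd) (natAbs_dvd_two_pow ⟨_, hQ'.symm⟩)
    have hQe : Q = 1 := by omega
    subst hQe
    rw [one_mul] at hQ'
    have hps1 : p ^ t = p := by
      have : ((p:ℕ) ^ t : ℤ) = ((p:ℕ) : ℤ) := by push_cast; linarith
      exact_mod_cast this
    exact Nat.pow_right_injective (show 2 ≤ p by omega) (hps1.trans (pow_one p).symm)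

-- from g^x = q^e with q prime, g ≥ 2, not perfect power, x ≥ 1 : g = q and x = e
lemma base_eq {g x q e : ℕ} (hq : q.Prime) (hg : 2 ≤ g) (hx : 1 ≤ x)
    (hnpp : ¬ IsPerfectPow g) (h : g ^ x = q ^ e) : g = q ∧ x = e := by
  have hgd : g ∣ q ^ e := h ▸ dvd_pow_self g (by omega)
  obtain ⟨k, hk, hke⟩ := (Nat.dvd_prime_pow hq).mp hgd
  have hk1 : 1 ≤ k := by
    rcases Nat.eq_zero_or_pos k with rfl | h' 
    · simp at hke; omega
    · omega
  have hkeq : k = 1 := by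
    by_contra hne
    exact hnpp ⟨q, k, hq.two_le, by omega, hke⟩
  subst hkeq
  rw [pow_one] at hke
  subst hke
  exact ⟨rfl, Nat.pow_right_injective hq.two_le h⟩

lemma master (p r s : ℕ) (hp : Nat.Prime p) (hp3 : 3 ≤ p) (hpodd : Odd p)
    (hr : 1 ≤ r) (hs : 1 ≤ s) (g x y : ℕ) :
    (2 ≤ g ∧ 1 ≤ x ∧ x < y ∧ ¬ IsPerfectPow g ∧ g ^ y = g ^ x + 2 ^ r * p ^ s) ↔
    ((s = 1 ∧ ∃ m, p + 1 = 2 ^ m ∧ g = 2 ∧ x = r ∧ y = r + m) ∨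
     (p = 2 ^ r + 1 ∧ g = p ∧ x = s ∧ y = s + 1) ∨
     (p = 3 ∧ r = 3 ∧ g = 3 ∧ x = s ∧ y = s + 2)) := by
  constructor
  · rintro ⟨hg, hx, hxy, hnpp, heq⟩
    set t := y - x with htdef
    have ht : 1 ≤ t := by omega
    have hyxt : y = x + t := by omega
    have hgt1 : 1 ≤ g ^ t := Nat.one_le_pow _ _ (by omega)
    have hAB : g ^ x * (g ^ t - 1) = 2 ^ r * p ^ s := by
      have h1 : g ^ x * g ^ t = g ^ x + 2 ^ r * p ^ s := by
        rw [← pow_add, ← hyxt]; exact heq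
      have h1' : (g:ℤ) ^ x * (g:ℤ) ^ t = (g:ℤ) ^ x + 2 ^ r * (p:ℤ) ^ s := by
        exact_mod_cast h1
      zify [hgt1]
      linear_combination h1'
    have hcopg : Nat.Coprime g (g ^ t - 1) := by
      have h2 : Nat.Coprime (g ^ t) (g ^ t - 1) := by
        have he : g ^ t - 1 + 1 = g ^ t := by omega
        rw [← he]
        simp [Nat.coprime_self_add_left]
      exact Nat.Coprime.coprime_dvd_left (dvd_pow_self g (by omega)) h2
    have hcop : Nat.Coprime (g ^ x) (g ^ t - 1) := hcopg.pow_left x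
    -- helper: a prime dividing both sides is impossible
    have hnot2 : ¬ (2 ∣ g ^ x ∧ 2 ∣ (g ^ t - 1)) := by
      rintro ⟨h1, h2⟩
      have := Nat.dvd_gcd h1 h2
      rw [hcop] at this
      omega
    have hnotp : ¬ (p ∣ g ^ x ∧ p ∣ (g ^ t - 1)) := by
      rintro ⟨h1, h2⟩
      have := Nat.dvd_gcd h1 h2
      rw [hcop] at this
      have := Nat.le_of_dvd one_pos this
      omega
    by_cases h2A : 2 ∣ g ^ x <;> by_cases hpA : p ∣ g ^ x
    · -- both divide A : g even and divisible by p : B = 1 : contradiction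
      exfalso
      have h2g : 2 ∣ g := Nat.Prime.dvd_of_dvd_pow Nat.prime_two h2A
      have hpg : p ∣ g := hp.dvd_of_dvd_pow hpA
      have hBd : (g ^ t - 1) ∣ 2 ^ r * p ^ s := ⟨g ^ x, by rw [← hAB]; ring⟩
      -- every prime factor of B is 2 or p, but B coprime to g which both divide
      have hB1 : g ^ t - 1 = 1 := by
        by_contra hne
        have hB2 : 2 ≤ g ^ t - 1 := by omega
        set q := (g ^ t - 1).minFac with hq
        have hqp : q.Prime := Nat.minFac_prime (by omega)
        have hqB : q ∣ g ^ t - 1 := Nat.minFac_dvd _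
        have hqd : q ∣ 2 ^ r * p ^ s := hqB.trans hBd
        have hq2p : q = 2 ∨ q = p := by
          rcases (Nat.Prime.dvd_mul hqp).mp hqd with h' | h'
          · left; exact (Nat.prime_dvd_prime_iff_eq hqp Nat.prime_two).mp
              (hqp.dvd_of_dvd_pow h')
          · right; exact (Nat.prime_dvd_prime_iff_eq hqp hp).mp (hqp.dvd_of_dvd_pow h')
        have hqg : q ∣ g := by rcases hq2p with h' | h' <;> rw [h'] <;> assumption
        have := Nat.dvd_gcd hqg hqB
        rw [hcopg] at this
        have := Nat.le_of_dvd one_pos this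
        exact absurd this (by have := hqp.two_le; omega)
      -- then g^t = 2, so g = 2, but p ∣ g, p ≥ 3
      have hgt2 : g ^ t = 2 := by omega
      have hgle : g ≤ g ^ t := Nat.le_self_pow (by omega) g
      have hg2 : g = 2 := by omega
      subst hg2
      have := Nat.le_of_dvd (by omega) hpg
      omega
    · -- 2 ∣ A, p ∤ A : A = 2^r, B = p^s
      have hnB2 : ¬ 2 ∣ (g ^ t - 1) := fun h' => hnot2 ⟨h2A, h'⟩
      have hcop2B : Nat.Coprime (2 ^ r) (g ^ t - 1) :=
        (Nat.Prime.coprime_iff_not_dvd Nat.prime_two |>.mpr hnB2).pow_left r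
      have h2rA : 2 ^ r ∣ g ^ x :=
        hcop2B.dvd_of_dvd_mul_right ⟨p ^ s, hAB⟩
      have hcoppA : Nat.Coprime (p ^ s) (g ^ x) :=
        (hp.coprime_iff_not_dvd.mpr hpA).pow_left s
      have hpsB : p ^ s ∣ (g ^ t - 1) :=
        hcoppA.dvd_of_dvd_mul_left ⟨2 ^ r, by rw [hAB]; ring⟩
      obtain ⟨a, ha⟩ := h2rA
      obtain ⟨b, hb⟩ := hpsB
      have hab : a * b = 1 := by
        have hpos : 0 < 2 ^ r * p ^ s := by positivity
        have : 2 ^ r * p ^ s * (a * b) = 2 ^ r * p ^ s * 1 := by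
          rw [mul_one]
          calc 2 ^ r * p ^ s * (a * b) = (2 ^ r * a) * (p ^ s * b) := by ring
          _ = g ^ x * (g ^ t - 1) := by rw [← ha, ← hb]
          _ = 2 ^ r * p ^ s := hAB
        exact Nat.eq_of_mul_eq_mul_left hpos this
      have hA : g ^ x = 2 ^ r := by
        rw [ha, Nat.eq_one_of_mul_eq_one_right hab, mul_one]
      have hB : g ^ t - 1 = p ^ s := by
        rw [hb, Nat.eq_one_of_mul_eq_one_left hab, mul_one]
      obtain ⟨hg2, hxr⟩ := base_eq Nat.prime_two hg hx hnpp hA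
      have hgt : 2 ^ t = p ^ s + 1 := by
        rw [← hg2]
        omega
      obtain ⟨hs1, hpm⟩ := L1 hp3 hpodd hs hgt
      left
      exact ⟨hs1, t, hpm, hg2, hxr, by omega⟩
    · -- p ∣ A, 2 ∤ A : A = p^s, B = 2^r
      have hnBp : ¬ p ∣ (g ^ t - 1) := fun h' => hnotp ⟨hpA, h'⟩
      have hcoppB : Nat.Coprime (p ^ s) (g ^ t - 1) :=
        (hp.coprime_iff_not_dvd.mpr hnBp).pow_left s
      have hpsA : p ^ s ∣ g ^ x :=
        hcoppB.dvd_of_dvd_mul_right ⟨2 ^ r, by rw [hAB]; ring⟩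
      have hcop2A : Nat.Coprime (2 ^ r) (g ^ x) :=
        (Nat.Prime.coprime_iff_not_dvd Nat.prime_two |>.mpr h2A).pow_left r
      have h2rB : 2 ^ r ∣ (g ^ t - 1) :=
        hcop2A.dvd_of_dvd_mul_left ⟨p ^ s, hAB⟩
      obtain ⟨a, ha⟩ := hpsA
      obtain ⟨b, hb⟩ := h2rB
      have hab : a * b = 1 := by
        have hpos : 0 < 2 ^ r * p ^ s := by positivity
        have : 2 ^ r * p ^ s * (a * b) = 2 ^ r * p ^ s * 1 := by
          rw [mul_one]
          calc 2 ^ r * p ^ s * (a * b) = (p ^ s * a) * (2 ^ r * b) := by ring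
          _ = g ^ x * (g ^ t - 1) := by rw [← ha, ← hb]
          _ = 2 ^ r * p ^ s := hAB
        exact Nat.eq_of_mul_eq_mul_left hpos this
      have hA : g ^ x = p ^ s := by
        rw [ha, Nat.eq_one_of_mul_eq_one_right hab, mul_one]
      have hB : g ^ t - 1 = 2 ^ r := by
        rw [hb, Nat.eq_one_of_mul_eq_one_left hab, mul_one]
      obtain ⟨hgp, hxs⟩ := base_eq hp hg hx hnpp hA
      have hgt : p ^ t = 2 ^ r + 1 := by rw [← hgp]; omega
      rcases L2 hp3 hpodd ht hgt with ht1 | ⟨hpe, ht2, hre⟩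
      · right; left
        refine ⟨?_, hgp, hxs, by omega⟩
        rw [ht1, pow_one] at hgt
        omega
      · right; right
        exact ⟨hpe, hre, by omega, hxs, by omega⟩
    · -- no prime divides A, but g ≥ 2
      exfalso
      set q := g.minFac with hq
      have hqp : q.Prime := Nat.minFac_prime (by omega)
      have hqg : q ∣ g := Nat.minFac_dvd _
      have hqA : q ∣ g ^ x := hqg.trans (dvd_pow_self g (by omega))
      have hqd : q ∣ 2 ^ r * p ^ s := hqA.trans ⟨g ^ t - 1, hAB.symm⟩
      rcases (Nat.Prime.dvd_mul hqp).mp hqd with h' | h'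
      · have : q = 2 := (Nat.prime_dvd_prime_iff_eq hqp Nat.prime_two).mp
          (hqp.dvd_of_dvd_pow h')
        exact h2A (this ▸ hqA)
      · have : q = p := (Nat.prime_dvd_prime_iff_eq hqp hp).mp (hqp.dvd_of_dvd_pow h')
        exact hpA (this ▸ hqA)
  · rintro (⟨hs1, m, hpm, rfl, rfl, rfl⟩ | ⟨hpe, rfl, rfl, rfl⟩ | ⟨hp3', hr3, rfl, rfl, rfl⟩)
    · have hm2 : 2 ≤ m := by
        rcases Nat.lt_or_ge m 2 with h' | h'
        · interval_cases m <;> omega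
        · exact h'
      subst hs1
      refine ⟨le_refl 2, hr, by omega, not_pp_prime Nat.prime_two, ?_⟩
      rw [pow_add, ← hpm, pow_one]
      ring
    · refine ⟨by omega, hs, by omega, not_pp_prime hp, ?_⟩
      rw [pow_succ]
      nth_rewrite 2 [hpe]
      ring
    · subst hp3'
      refine ⟨by omega, hs, by omega, not_pp_prime hp, ?_⟩
      subst hr3
      rw [pow_add]
      norm_num
      ring


lemma two_le_m {p m : ℕ} (hp3 : 3 ≤ p) (hm : p + 1 = 2 ^ m) : 2 ≤ m := by
  by_contra h'
  interval_cases m <;> omega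

lemma pow2_add_two {m r : ℕ} (hr : 1 ≤ r) (h : (2:ℕ) ^ m = 2 ^ r + 2) :
    r = 1 ∧ m = 2 := by
  rcases Nat.lt_or_ge r 2 with h2 | h2
  · have hr1 : r = 1 := by omega
    subst hr1
    have hm2 : (2:ℕ) ^ m = 2 ^ 2 := by rw [h]; norm_num
    exact ⟨rfl, two_pow_inj hm2⟩
  · exfalso
    obtain ⟨k, hk⟩ : (4:ℕ) ∣ 2 ^ r :=
      ⟨2 ^ (r - 2), by rw [show r = 2 + (r - 2) by omega, pow_add]; norm_num⟩
    have hk1 : 1 ≤ k := by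
      have : 1 ≤ 2 ^ r := Nat.one_le_two_pow
      omega
    have hm3 : 3 ≤ m := by
      by_contra h'
      interval_cases m <;> omega
    obtain ⟨a, ha⟩ : (8:ℕ) ∣ 2 ^ m :=
      ⟨2 ^ (m - 3), by rw [show m = 3 + (m - 3) by omega, pow_add]; norm_num⟩
    omega

lemma not_six_pow {m : ℕ} (h : (6:ℕ) = 2 ^ m) : False := by
  have hm2 : 2 ≤ m := by
    by_contra h'
    interval_cases m <;> omega
  rcases Nat.lt_or_ge m 3 with h3 | h3
  · interval_cases m <;> omega
  · have : (2:ℕ) ^ 3 ≤ 2 ^ m := Nat.pow_le_pow_right (by norm_num) h3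
    omega

theorem stmt10 (p r s : ℕ) (hp : p.Prime) (hp3 : 3 ≤ p) (hpodd : Odd p)
    (hr : 1 ≤ r) (hs : 1 ≤ s) :
    (p = 3 ∧ s = 1 ∧ (r = 1 ∨ r = 3) → Nminus (2 ^ r * p ^ s) = 2) ∧
    (p = 3 ∧ s = 1 ∧ ¬(r = 1 ∨ r = 3) → Nminus (2 ^ r * p ^ s) = 1) ∧
    (p = 3 ∧ 2 ≤ s ∧ (r = 1 ∨ r = 3) → Nminus (2 ^ r * p ^ s) = 1) ∧
    (7 ≤ p ∧ MersennePrime p ∧ s = 1 → Nminus (2 ^ r * p ^ s) = 1) ∧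
    (p = 2 ^ r + 1 ∧ 2 ≤ r → Nminus (2 ^ r * p ^ s) = 1) ∧
    (¬(p = 3 ∧ s = 1 ∧ (r = 1 ∨ r = 3)) ∧
     ¬(p = 3 ∧ s = 1 ∧ ¬(r = 1 ∨ r = 3)) ∧
     ¬(p = 3 ∧ 2 ≤ s ∧ (r = 1 ∨ r = 3)) ∧
     ¬(7 ≤ p ∧ MersennePrime p ∧ s = 1) ∧
     ¬(p = 2 ^ r + 1 ∧ 2 ≤ r) → Nminus (2 ^ r * p ^ s) = 0) := by

  have key : Nminus (2 ^ r * p ^ s) = ({T : ℕ × ℕ × ℕ |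
      (s = 1 ∧ ∃ m, p + 1 = 2 ^ m ∧ T = (2, r, r + m)) ∨
      (p = 2 ^ r + 1 ∧ T = (p, s, s + 1)) ∨
      (p = 3 ∧ r = 3 ∧ T = (3, s, s + 2))} : Set (ℕ × ℕ × ℕ)).ncard := by
    unfold Nminus
    congr 1
    ext ⟨g, x, y⟩
    simp only [Set.mem_setOf_eq, Prod.mk.injEq]
    constructor
    · intro h
      rcases (master p r s hp hp3 hpodd hr hs g x y).mp h with
        (⟨h1, m, hm, rfl, rfl, rfl⟩ | ⟨h1, rfl, rfl, rfl⟩ | ⟨h1, h2, rfl, rfl, rfl⟩)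
      · exact Or.inl ⟨h1, m, hm, rfl, rfl, rfl⟩
      · exact Or.inr (Or.inl ⟨h1, rfl, rfl, rfl⟩)
      · exact Or.inr (Or.inr ⟨h1, h2, rfl, rfl, rfl⟩)
    · intro h
      apply (master p r s hp hp3 hpodd hr hs g x y).mpr
      rcases h with (⟨h1, m, hm, rfl, rfl, rfl⟩ | ⟨h1, rfl, rfl, rfl⟩ | ⟨h1, h2, rfl, rfl, rfl⟩)
      · exact Or.inl ⟨h1, m, hm, rfl, rfl, rfl⟩
      · exact Or.inr (Or.inl ⟨h1, rfl, rfl, rfl⟩)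
      · exact Or.inr (Or.inr ⟨h1, h2, rfl, rfl, rfl⟩)
  refine ⟨?_, ?_, ?_, ?_, ?_, ?_⟩
  · -- case 1 : p = 3, s = 1, r ∈ {1,3}
    rintro ⟨rfl, rfl, hr13⟩
    rw [key]
    have hset : {T : ℕ × ℕ × ℕ |
        (1 = 1 ∧ ∃ m, 3 + 1 = 2 ^ m ∧ T = (2, r, r + m)) ∨
        (3 = 2 ^ r + 1 ∧ T = (3, 1, 1 + 1)) ∨
        (3 = 3 ∧ r = 3 ∧ T = (3, 1, 1 + 2))} =
        {((2:ℕ), r, r + 2), ((3:ℕ), 1, if r = 1 then 2 else 3)} := by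
      ext T
      simp only [Set.mem_setOf_eq, Set.mem_insert_iff, Set.mem_singleton_iff]
      constructor
      · rintro (⟨-, m, hm, rfl⟩ | ⟨h1, rfl⟩ | ⟨-, h2, rfl⟩)
        · left
          have hm2 : m = 2 := two_pow_inj (show (2:ℕ) ^ m = 2 ^ 2 by omega)
          rw [hm2]
        · right
          have hr1 : r = 1 := by
            have : (2:ℕ) ^ r = 2 ^ 1 := by omega
            exact two_pow_inj this
          simp [hr1]
        · right
          simp [h2]
      · rintro (rfl | rfl)
        · exact Or.inl ⟨trivial, 2, by norm_num, rfl⟩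
        · rcases hr13 with rfl | rfl
          · exact Or.inr (Or.inl ⟨by norm_num, by norm_num⟩)
          · exact Or.inr (Or.inr ⟨trivial, rfl, by norm_num⟩)
    rw [hset]
    rw [Set.ncard_pair (by simp)]
  · -- case 2 : p = 3, s = 1, r ∉ {1,3}
    rintro ⟨rfl, rfl, hr13⟩
    rw [key]
    have hset : {T : ℕ × ℕ × ℕ |
        (1 = 1 ∧ ∃ m, 3 + 1 = 2 ^ m ∧ T = (2, r, r + m)) ∨
        (3 = 2 ^ r + 1 ∧ T = (3, 1, 1 + 1)) ∨
        (3 = 3 ∧ r = 3 ∧ T = (3, 1, 1 + 2))} = {((2:ℕ), r, r + 2)} := by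
      ext T
      simp only [Set.mem_setOf_eq, Set.mem_singleton_iff]
      constructor
      · rintro (⟨-, m, hm, rfl⟩ | ⟨h1, rfl⟩ | ⟨-, h2, rfl⟩)
        · have hm2 : m = 2 := two_pow_inj (show (2:ℕ) ^ m = 2 ^ 2 by omega)
          rw [hm2]
        · exfalso
          have hr1 : r = 1 := two_pow_inj (show (2:ℕ) ^ r = 2 ^ 1 by omega)
          exact hr13 (Or.inl hr1)
        · exact absurd (Or.inr h2) hr13
      · rintro rfl
        exact Or.inl ⟨trivial, 2, by norm_num, rfl⟩
    rw [hset, Set.ncard_singleton]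
  · -- case 3 : p = 3, 2 ≤ s, r ∈ {1,3}
    rintro ⟨rfl, hs2, hr13⟩
    rw [key]
    have hset : {T : ℕ × ℕ × ℕ |
        (s = 1 ∧ ∃ m, 3 + 1 = 2 ^ m ∧ T = (2, r, r + m)) ∨
        (3 = 2 ^ r + 1 ∧ T = (3, s, s + 1)) ∨
        (3 = 3 ∧ r = 3 ∧ T = (3, s, s + 2))} =
        {((3:ℕ), s, if r = 1 then s + 1 else s + 2)} := by
      ext T
      simp only [Set.mem_setOf_eq, Set.mem_singleton_iff]
      constructor
      · rintro (⟨h1, -⟩ | ⟨h1, rfl⟩ | ⟨-, h2, rfl⟩)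
        · omega
        · have hr1 : r = 1 := two_pow_inj (show (2:ℕ) ^ r = 2 ^ 1 by omega)
          simp [hr1]
        · have : r ≠ 1 := by omega
          simp [this]
      · rintro rfl
        rcases hr13 with rfl | rfl
        · simp only [if_pos rfl]
          exact Or.inr (Or.inl ⟨by norm_num, rfl⟩)
        · simp only [if_neg (by norm_num : (3:ℕ) ≠ 1)]
          exact Or.inr (Or.inr (by norm_num))
    rw [hset, Set.ncard_singleton]
  · -- case 4 : 7 ≤ p, Mersenne, s = 1
    rintro ⟨hp7, ⟨-, m, hm1, hm⟩, rfl⟩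
    rw [key]
    have hset : {T : ℕ × ℕ × ℕ |
        (1 = 1 ∧ ∃ m', p + 1 = 2 ^ m' ∧ T = (2, r, r + m')) ∨
        (p = 2 ^ r + 1 ∧ T = (p, 1, 1 + 1)) ∨
        (p = 3 ∧ r = 3 ∧ T = (3, 1, 1 + 2))} = {((2:ℕ), r, r + m)} := by
      ext T
      simp only [Set.mem_setOf_eq, Set.mem_singleton_iff]
      constructor
      · rintro (⟨-, m', hm', rfl⟩ | ⟨h1, rfl⟩ | ⟨h1, -, -⟩)
        · have : m' = m := two_pow_inj (show (2:ℕ) ^ m' = 2 ^ m by omega)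
          rw [this]
        · exfalso
          have h2m : (2:ℕ) ^ m = 2 ^ r + 2 := by omega
          obtain ⟨hr1, hm2⟩ := pow2_add_two hr h2m
          subst hr1
          omega
        · omega
      · rintro rfl
        exact Or.inl ⟨trivial, m, hm, rfl⟩
    rw [hset, Set.ncard_singleton]
  · -- case 5 : p = 2^r + 1, 2 ≤ r
    rintro ⟨hpe, hr2⟩
    rw [key]
    have hset : {T : ℕ × ℕ × ℕ |
        (s = 1 ∧ ∃ m, p + 1 = 2 ^ m ∧ T = (2, r, r + m)) ∨
        (p = 2 ^ r + 1 ∧ T = (p, s, s + 1)) ∨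
        (p = 3 ∧ r = 3 ∧ T = (3, s, s + 2))} = {(p, s, s + 1)} := by
      ext T
      simp only [Set.mem_setOf_eq, Set.mem_singleton_iff]
      constructor
      · rintro (⟨-, m, hm, rfl⟩ | ⟨-, rfl⟩ | ⟨h1, h2, -⟩)
        · exfalso
          have h2m : (2:ℕ) ^ m = 2 ^ r + 2 := by omega
          obtain ⟨hr1, -⟩ := pow2_add_two hr h2m
          omega
        · rfl
        · exfalso
          subst h2
          rw [h1] at hpe
          norm_num at hpe
      · rintro rfl
        exact Or.inr (Or.inl ⟨hpe, rfl⟩)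
    rw [hset, Set.ncard_singleton]
  · -- case 6 : none of the above
    rintro ⟨hc1, hc2, hc3, hc4, hc5⟩
    rw [key]
    have hset : {T : ℕ × ℕ × ℕ |
        (s = 1 ∧ ∃ m, p + 1 = 2 ^ m ∧ T = (2, r, r + m)) ∨
        (p = 2 ^ r + 1 ∧ T = (p, s, s + 1)) ∨
        (p = 3 ∧ r = 3 ∧ T = (3, s, s + 2))} = (∅ : Set (ℕ × ℕ × ℕ)) := by
      rw [Set.eq_empty_iff_forall_notMem]
      rintro T (⟨hs1, m, hm, -⟩ | ⟨hpe, -⟩ | ⟨hp3', hr3, -⟩)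
      · -- Mersenne branch
        have hm2 : 2 ≤ m := two_le_m hp3 hm
        have hMP : MersennePrime p := ⟨hp, m, by omega, hm⟩
        rcases Nat.lt_or_ge p 7 with hlt | hge
        · have hpodd' : p % 2 = 1 := Nat.odd_iff.mp hpodd
          have : p = 3 ∨ p = 5 := by omega
          rcases this with rfl | rfl
          · exact hc1 ⟨rfl, hs1, by
              by_contra hcon
              exact hc2 ⟨rfl, hs1, hcon⟩⟩
          · exact not_six_pow (by omega : (6:ℕ) = 2 ^ m)
        · exact hc4 ⟨hge, hMP, hs1⟩
      · -- Fermat branch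
        rcases Nat.lt_or_ge r 2 with hlt | hge
        · have hr1 : r = 1 := by omega
          subst hr1
          have hp3'' : p = 3 := by norm_num at hpe; exact hpe
          subst hp3''
          rcases Nat.eq_or_lt_of_le hs with hs1 | hs2
          · exact hc1 ⟨rfl, hs1.symm, by
              by_contra hcon
              exact hc2 ⟨rfl, hs1.symm, hcon⟩⟩
          · exact hc3 ⟨rfl, by omega, Or.inl rfl⟩
        · exact hc5 ⟨hpe, hge⟩
      · -- (3, s, s+2) branch
        subst hp3'
        rcases Nat.eq_or_lt_of_le hs with hs1 | hs2
        · exact hc1 ⟨rfl, hs1.symm, by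
            by_contra hcon
            exact hc2 ⟨rfl, hs1.symm, hcon⟩⟩
        · exact hc3 ⟨rfl, by omega, Or.inr hr3⟩
    rw [hset, Set.ncard_empty]
end

section
/- If d is a positive even integer having exactly m distinct prime factors, where m ≥ 3, then N⁺(d) + N⁻(d) ≤ 2^m − 2. -/
/-! ### Auxiliary lemmas -/

/-- If `g ≥ 2` is not a perfect power, the gcd of the exponents in its prime
factorization is `1`. -/
lemma expGcd_eq_one {g : ℕ} (hg : 2 ≤ g) (h : ¬ IsPerfectPow g) :
    Finset.gcd g.primeFactors (fun p => g.factorization p) = 1 := by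
  by_contra hne
  set e := Finset.gcd g.primeFactors (fun p => g.factorization p) with he
  have hgne : g ≠ 0 := by omega
  obtain ⟨p0, hp0⟩ := Nat.nonempty_primeFactors.mpr (by omega : 1 < g)
  have hdvd : ∀ p ∈ g.primeFactors, e ∣ g.factorization p := fun p hp => Finset.gcd_dvd hp
  have hvp0 : g.factorization p0 ≠ 0 := by
    rw [← Nat.support_factorization] at hp0; exact Finsupp.mem_support_iff.mp hp0
  have hepos : e ≠ 0 := by
    intro h0
    exact hvp0 (zero_dvd_iff.mp (h0 ▸ hdvd p0 hp0))
  have he2 : 2 ≤ e := by omega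
  have key : (∏ p ∈ g.primeFactors, p ^ (g.factorization p / e)) ^ e = g := by
    rw [← Finset.prod_pow]
    have hc : ∀ p ∈ g.primeFactors, (p ^ (g.factorization p / e)) ^ e = p ^ g.factorization p := by
      intro p hp; rw [← pow_mul, Nat.div_mul_cancel (hdvd p hp)]
    rw [Finset.prod_congr rfl hc]
    conv_rhs => rw [← Nat.factorization_prod_pow_eq_self hgne]
    rfl
  refine h ⟨_, e, ?_, he2, key.symm⟩
  by_contra h'
  push_neg at h'
  have := Nat.pow_le_pow_left (show (∏ p ∈ g.primeFactors, p ^ (g.factorization p / e)) ≤ 1 by omega) e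
  rw [key, one_pow] at this
  omega

lemma gcd_exp_pow (g x : ℕ) (hx : x ≠ 0) :
    Finset.gcd (g ^ x).primeFactors (fun p => (g ^ x).factorization p) =
      x * Finset.gcd g.primeFactors (fun p => g.factorization p) := by
  rw [Nat.primeFactors_pow g hx]
  have hc : ∀ p ∈ g.primeFactors, (g ^ x).factorization p = x * g.factorization p := by
    intro p _; rw [Nat.factorization_pow]; simp
  rw [Finset.gcd_congr rfl hc, Finset.gcd_mul_left]
  simp

/-- Uniqueness of the representation of an integer as a power of a
non-perfect-power base. -/
lemma basePow_inj {g h x z : ℕ} (hg : 2 ≤ g) (hh : 2 ≤ h) (hx : 1 ≤ x) (hz : 1 ≤ z)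
    (hgp : ¬IsPerfectPow g) (hhp : ¬IsPerfectPow h) (heq : g ^ x = h ^ z) :
    g = h ∧ x = z := by
  have hxz : x = z := by
    have e1 := gcd_exp_pow g x (by omega)
    have e2 := gcd_exp_pow h z (by omega)
    rw [expGcd_eq_one hg hgp, mul_one] at e1
    rw [expGcd_eq_one hh hhp, mul_one] at e2
    rw [heq, e2] at e1
    omega
  subst hxz
  refine ⟨Nat.eq_of_factorization_eq (by omega) (by omega) fun p => ?_, rfl⟩
  have hfp := congrArg (fun n => Nat.factorization n p) heq
  simp only [Nat.factorization_pow, Finsupp.smul_apply, smul_eq_mul] at hfp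
  exact Nat.eq_of_mul_eq_mul_left (by omega) hfp

/-- In a coprime factorization of `d`, the factor is determined by its set of
prime factors. -/
lemma part_unique {d A B A' B' : ℕ} (hd : d ≠ 0) (h1 : A * B = d) (h2 : A' * B' = d)
    (c1 : Nat.Coprime A B) (c2 : Nat.Coprime A' B') (hS : A.primeFactors = A'.primeFactors) :
    A = A' := by
  have hA : A ≠ 0 := left_ne_zero_of_mul (by rw [h1]; exact hd)
  have hB : B ≠ 0 := right_ne_zero_of_mul (by rw [h1]; exact hd)
  have hA' : A' ≠ 0 := left_ne_zero_of_mul (by rw [h2]; exact hd)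
  have hB' : B' ≠ 0 := right_ne_zero_of_mul (by rw [h2]; exact hd)
  apply Nat.eq_of_factorization_eq hA hA'
  intro p
  have key : ∀ X Y : ℕ, X ≠ 0 → Y ≠ 0 → X * Y = d → Nat.Coprime X Y → p ∈ X.primeFactors →
      X.factorization p = d.factorization p := by
    intro X Y hX hY hXY hcop hp
    have hpp : Nat.Prime p := Nat.prime_of_mem_primeFactors hp
    have hYz : Y.factorization p = 0 := by
      apply Nat.factorization_eq_zero_of_not_dvd
      intro hdvd
      have h1' : p ∣ Nat.gcd X Y := Nat.dvd_gcd (Nat.dvd_of_mem_primeFactors hp) hdvd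
      rw [hcop] at h1'
      exact hpp.one_lt.ne' (Nat.eq_one_of_dvd_one h1')
    have e1 := congrArg (fun f => f p) (Nat.factorization_mul hX hY)
    simp only [Finsupp.add_apply, Finsupp.coe_add, Pi.add_apply] at e1
    rw [hXY] at e1
    omega
  by_cases hp : p ∈ A.primeFactors
  · rw [key A B hA hB h1 c1 hp, key A' B' hA' hB' h2 c2 (hS ▸ hp)]
  · have hp' : p ∉ A'.primeFactors := hS ▸ hp
    rw [← Nat.support_factorization] at hp hp'
    rw [Finsupp.notMem_support_iff.mp hp, Finsupp.notMem_support_iff.mp hp']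

/-- Master uniqueness lemma for coprime decompositions with non-perfect-power bases. -/
lemma decomp_unique {d g x c g' x' c' : ℕ} (hd : d ≠ 0)
    (hg : 2 ≤ g) (hx : 1 ≤ x) (hg' : 2 ≤ g') (hx' : 1 ≤ x')
    (hng : ¬IsPerfectPow g) (hng' : ¬IsPerfectPow g')
    (hc : Nat.Coprime g c) (hc' : Nat.Coprime g' c')
    (h1 : g ^ x * c = d) (h2 : g' ^ x' * c' = d)
    (hS : g.primeFactors = g'.primeFactors) :
    g = g' ∧ x = x' ∧ c = c' := by
  have hS' : (g ^ x).primeFactors = (g' ^ x').primeFactors := by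
    rw [Nat.primeFactors_pow g (by omega), Nat.primeFactors_pow g' (by omega)]; exact hS
  have hA : g ^ x = g' ^ x' :=
    part_unique hd h1 h2 (Nat.Coprime.pow_left x hc) (Nat.Coprime.pow_left x' hc') hS'
  obtain ⟨hgg, hxx⟩ := basePow_inj hg hg' hx hx' hng hng' hA
  subst hgg; subst hxx
  refine ⟨rfl, rfl, ?_⟩
  rw [← h2] at h1
  exact Nat.eq_of_mul_eq_mul_left (by positivity) h1

lemma cop_plus {g k : ℕ} (hk : k ≠ 0) : Nat.Coprime g (g ^ k + 1) :=
  Nat.Coprime.coprime_dvd_left (dvd_pow_self g hk)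
    (Nat.coprime_self_add_right.mpr (Nat.coprime_one_right _))

lemma cop_minus {g k : ℕ} (hg : 1 ≤ g) (hk : k ≠ 0) : Nat.Coprime g (g ^ k - 1) := by
  have h1 : 1 ≤ g ^ k := Nat.one_le_pow _ _ (by omega)
  refine Nat.Coprime.coprime_dvd_left (dvd_pow_self g hk) ?_
  have h2 := Nat.coprime_add_self_left.mpr (Nat.coprime_one_left (g ^ k - 1))
  rwa [show 1 + (g ^ k - 1) = g ^ k by omega] at h2

lemma plus_decomp {d g x y : ℕ} (hxy : x < y) (he : g ^ y + g ^ x = d) :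
    g ^ x * (g ^ (y - x) + 1) = d := by
  have hpow : g ^ x * g ^ (y - x) = g ^ y := by rw [← pow_add]; congr 1; omega
  calc g ^ x * (g ^ (y - x) + 1) = g ^ x * g ^ (y - x) + g ^ x := by ring
    _ = d := by rw [hpow]; exact he

lemma minus_decomp {d g x y : ℕ} (hg : 2 ≤ g) (hxy : x < y) (he : g ^ y = g ^ x + d) :
    g ^ x * (g ^ (y - x) - 1) = d := by
  have hpow : g ^ x * g ^ (y - x) = g ^ y := by rw [← pow_add]; congr 1; omega
  have h1 : 1 ≤ g ^ (y - x) := Nat.one_le_pow _ _ (by omega)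
  obtain ⟨v, hv⟩ : ∃ v, g ^ (y - x) = v + 1 := ⟨g ^ (y - x) - 1, by omega⟩
  rw [hv] at hpow ⊢
  have e1 : g ^ x * (v + 1) = g ^ x * v + g ^ x := by ring
  rw [e1] at hpow
  have e2 : g ^ x * v + g ^ x = d + g ^ x := by rw [hpow]; omega
  simpa using Nat.add_right_cancel e2

/-- The prime factors of the base of a solution form a nonempty proper subset of
the prime factors of `d`. -/
lemma target_mem {d g x c : ℕ} (hd : d ≠ 0) (hg : 2 ≤ g) (hx : 1 ≤ x) (hc2 : 2 ≤ c)
    (hcop : Nat.Coprime g c) (hdc : g ^ x * c = d) :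
    g.primeFactors ∈ (d.primeFactors.powerset.erase ∅).erase d.primeFactors := by
  have hgd : g ∣ d := dvd_trans (dvd_pow_self g (by omega)) ⟨c, hdc.symm⟩
  have hsub : g.primeFactors ⊆ d.primeFactors := Nat.primeFactors_mono hgd hd
  obtain ⟨q, hq, hqc⟩ := Nat.exists_prime_and_dvd (show c ≠ 1 by omega)
  have hqd : q ∣ d := hqc.trans ⟨g ^ x, by rw [← hdc]; ring⟩
  have hqP : q ∈ d.primeFactors := Nat.mem_primeFactors.mpr ⟨hq, hqd, hd⟩
  have hqg : q ∉ g.primeFactors := by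
    intro hqg
    have hcq : Nat.Coprime q c :=
      Nat.Coprime.coprime_dvd_left (Nat.dvd_of_mem_primeFactors hqg) hcop
    have : q ∣ Nat.gcd q c := Nat.dvd_gcd dvd_rfl hqc
    rw [hcq] at this
    exact hq.one_lt.ne' (Nat.eq_one_of_dvd_one this)
  refine Finset.mem_erase.mpr ⟨fun hE => hqg (hE ▸ hqP), Finset.mem_erase.mpr
    ⟨(Nat.nonempty_primeFactors.mpr (by omega : 1 < g)).ne_empty, Finset.mem_powerset.mpr hsub⟩⟩

/-- A solution of the `+` equation and a solution of the `-` equation cannot share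
the same base data when `d` has at least 3 prime factors. -/
lemma cross_case {d g x k k' : ℕ} (hP : 3 ≤ d.primeFactors.card) (hg : 2 ≤ g) (hx : 1 ≤ x)
    (hk : 1 ≤ k) (hk' : 1 ≤ k')
    (hdc : g ^ x * (g ^ k + 1) = d) (heq : g ^ k + 1 = g ^ k' - 1) : False := by
  have h1 : 1 ≤ g ^ k' := Nat.one_le_pow _ _ (by omega)
  have heq2 : g ^ k' = g ^ k + 2 := by omega
  have hgdvd : g ∣ 2 :=
    (Nat.dvd_add_right (dvd_pow_self g (by omega : k ≠ 0))).mp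
      (heq2 ▸ dvd_pow_self g (by omega : k' ≠ 0))
  have hg2 : g = 2 := by have := Nat.le_of_dvd (by norm_num) hgdvd; omega
  subst hg2
  have hk1 : k = 1 := by
    by_contra hne
    have h4 : (4 : ℕ) ∣ 2 ^ k := by
      calc (4 : ℕ) = 2 ^ 2 := by norm_num
        _ ∣ 2 ^ k := pow_dvd_pow 2 (by omega)
    have h2k : 2 ≤ 2 ^ k := Nat.le_self_pow (by omega) 2
    have hk'2 : 2 ≤ k' := by
      rcases Nat.lt_or_ge k' 2 with h | h
      · interval_cases k' <;> omega
      · exact h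
    have h4' : (4 : ℕ) ∣ 2 ^ k' := by
      calc (4 : ℕ) = 2 ^ 2 := by norm_num
        _ ∣ 2 ^ k' := pow_dvd_pow 2 hk'2
    omega
  subst hk1
  have hd3 : 2 ^ x * 3 = d := by norm_num at hdc; exact hdc
  have hsub : d.primeFactors ⊆ {2, 3} := by
    rw [← hd3, Nat.primeFactors_mul (by positivity) (by norm_num),
      Nat.primeFactors_prime_pow (by omega) Nat.prime_two,
      Nat.Prime.primeFactors Nat.prime_three]
    decide
  have := Finset.card_le_card hsub
  simp at this
  omega

theorem stmt11 (d m : ℕ) (hd : 0 < d) (heven : Even d)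
    (hm : d.primeFactors.card = m) (hm3 : 3 ≤ m) :
    Nplus d + Nminus d ≤ 2 ^ m - 2 := by
  subst hm
  have hdne : d ≠ 0 := by omega
  set Target : Finset (Finset ℕ) := (d.primeFactors.powerset.erase ∅).erase d.primeFactors
    with hT
  set f : ℕ × ℕ × ℕ → Finset ℕ := fun T => T.1.primeFactors with hf
  set Sp : Set (ℕ × ℕ × ℕ) := {T : ℕ × ℕ × ℕ | 2 ≤ T.1 ∧ 1 ≤ T.2.1 ∧ T.2.1 < T.2.2 ∧
    ¬ IsPerfectPow T.1 ∧ T.1 ^ T.2.2 + T.1 ^ T.2.1 = d} with hSp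
  set Sm : Set (ℕ × ℕ × ℕ) := {T : ℕ × ℕ × ℕ | 2 ≤ T.1 ∧ 1 ≤ T.2.1 ∧ T.2.1 < T.2.2 ∧
    ¬ IsPerfectPow T.1 ∧ T.1 ^ T.2.2 = T.1 ^ T.2.1 + d} with hSm
  -- cofactor of a minus-solution is at least 2
  have minus_c2 : ∀ g x y : ℕ, 2 ≤ g → 1 ≤ x → x < y → g ^ x * (g ^ (y - x) - 1) = d →
      2 ≤ g ^ (y - x) - 1 := by
    intro g x y hg hx hxy hdc
    have hgk : g ≤ g ^ (y - x) := Nat.le_self_pow (by omega) g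
    by_contra hcon
    have h1 : 1 ≤ g ^ (y - x) := Nat.one_le_pow _ _ (by omega)
    have hgk2 : g ^ (y - x) = 2 := by omega
    have hg2 : g = 2 := by omega
    subst hg2
    rw [hgk2] at hdc
    have hdx : (2 : ℕ) ^ x = d := by simpa using hdc
    have hPF : d.primeFactors = {2} := by
      rw [← hdx]; exact Nat.primeFactors_prime_pow (by omega) Nat.prime_two
    rw [hPF] at hm3
    simp at hm3
  -- membership of images in the target
  have hmapP : ∀ T ∈ Sp, f T ∈ Target := by
    rintro ⟨g, x, y⟩ hTm
    obtain ⟨hg, hx, hxy, hnp, he⟩ := hTm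
    dsimp only at hg hx hxy hnp he
    have hdc := plus_decomp hxy he
    have h1 : 1 ≤ g ^ (y - x) := Nat.one_le_pow _ _ (by omega)
    have hc2 : 2 ≤ g ^ (y - x) + 1 := by omega
    exact target_mem hdne hg hx hc2 (cop_plus (by omega : y - x ≠ 0)) hdc
  have hmapM : ∀ T ∈ Sm, f T ∈ Target := by
    rintro ⟨g, x, y⟩ hTm
    obtain ⟨hg, hx, hxy, hnp, he⟩ := hTm
    dsimp only at hg hx hxy hnp he
    have hdc := minus_decomp hg hxy he
    exact target_mem hdne hg hx (minus_c2 g x y hg hx hxy hdc)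
      (cop_minus (by omega) (by omega : y - x ≠ 0)) hdc
  -- injectivity on each class
  have hinjP : Set.InjOn f Sp := by
    rintro ⟨g, x, y⟩ hTm ⟨g', x', y'⟩ hTm' hfe
    obtain ⟨hg, hx, hxy, hnp, he⟩ := hTm
    obtain ⟨hg', hx', hxy', hnp', he'⟩ := hTm'
    dsimp only at hg hx hxy hnp he hg' hx' hxy' hnp' he' hfe
    have hdc := plus_decomp hxy he
    have hdc' := plus_decomp hxy' he'
    obtain ⟨hgg, hxx, hcc⟩ := decomp_unique hdne hg hx hg' hx' hnp hnp'
      (cop_plus (by omega : y - x ≠ 0)) (cop_plus (by omega : y' - x' ≠ 0)) hdc hdc' hfe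
    subst hgg; subst hxx
    have hkk : g ^ (y - x) = g ^ (y' - x) := by omega
    have hkk2 : y - x = y' - x := Nat.pow_right_injective hg hkk
    have hy : y = y' := by omega
    simp only [Prod.mk.injEq]
    exact ⟨trivial, trivial, hy⟩
  have hinjM : Set.InjOn f Sm := by
    rintro ⟨g, x, y⟩ hTm ⟨g', x', y'⟩ hTm' hfe
    obtain ⟨hg, hx, hxy, hnp, he⟩ := hTm
    obtain ⟨hg', hx', hxy', hnp', he'⟩ := hTm'
    dsimp only at hg hx hxy hnp he hg' hx' hxy' hnp' he' hfe
    have hdc := minus_decomp hg hxy he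
    have hdc' := minus_decomp hg' hxy' he'
    obtain ⟨hgg, hxx, hcc⟩ := decomp_unique hdne hg hx hg' hx' hnp hnp'
      (cop_minus (by omega) (by omega : y - x ≠ 0))
      (cop_minus (by omega) (by omega : y' - x' ≠ 0)) hdc hdc' hfe
    subst hgg; subst hxx
    have h1 : 1 ≤ g ^ (y - x) := Nat.one_le_pow _ _ (by omega)
    have h1' : 1 ≤ g ^ (y' - x) := Nat.one_le_pow _ _ (by omega)
    have hkk : g ^ (y - x) = g ^ (y' - x) := by omega
    have hkk2 : y - x = y' - x := Nat.pow_right_injective hg hkk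
    have hy : y = y' := by omega
    simp only [Prod.mk.injEq]
    exact ⟨trivial, trivial, hy⟩
  -- the two image classes are disjoint
  have hdisj : Disjoint (f '' Sp) (f '' Sm) := by
    rw [Set.disjoint_left]
    rintro S ⟨⟨g, x, y⟩, hTm, rfl⟩ ⟨⟨g', x', y'⟩, hTm', hfe⟩
    obtain ⟨hg, hx, hxy, hnp, he⟩ := hTm
    obtain ⟨hg', hx', hxy', hnp', he'⟩ := hTm'
    dsimp only at hg hx hxy hnp he hg' hx' hxy' hnp' he' hfe
    have hdc := plus_decomp hxy he
    have hdc' := minus_decomp hg' hxy' he'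
    obtain ⟨hgg, hxx, hcc⟩ := decomp_unique hdne hg hx hg' hx' hnp hnp'
      (cop_plus (by omega : y - x ≠ 0))
      (cop_minus (by omega) (by omega : y' - x' ≠ 0)) hdc hdc' hfe.symm
    subst hgg; subst hxx
    exact cross_case hm3 hg hx (by omega : 1 ≤ y - x) (by omega : 1 ≤ y' - x) hdc hcc
  -- counting
  have himgP : f '' Sp ⊆ ↑Target := by rintro S ⟨T, hTm, rfl⟩; exact hmapP T hTm
  have himgM : f '' Sm ⊆ ↑Target := by rintro S ⟨T, hTm, rfl⟩; exact hmapM T hTm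
  have hfinP : (f '' Sp).Finite := Target.finite_toSet.subset himgP
  have hfinM : (f '' Sm).Finite := Target.finite_toSet.subset himgM
  have eP : Nplus d = Sp.ncard := rfl
  have eM : Nminus d = Sm.ncard := rfl
  have hTcard : Target.card = 2 ^ d.primeFactors.card - 2 := by
    have hPne : d.primeFactors ≠ ∅ := by
      intro h0
      rw [h0] at hm3
      simp at hm3
    have h1 : d.primeFactors ∈ d.primeFactors.powerset.erase ∅ :=
      Finset.mem_erase.mpr ⟨hPne, Finset.mem_powerset_self _⟩
    have h0 : (∅ : Finset ℕ) ∈ d.primeFactors.powerset := Finset.empty_mem_powerset _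
    rw [hT, Finset.card_erase_of_mem h1, Finset.card_erase_of_mem h0, Finset.card_powerset]
    have : 1 ≤ 2 ^ d.primeFactors.card := Nat.one_le_two_pow
    omega
  calc Nplus d + Nminus d = Sp.ncard + Sm.ncard := by rw [eP, eM]
    _ = (f '' Sp).ncard + (f '' Sm).ncard := by
        rw [Set.ncard_image_of_injOn hinjP, Set.ncard_image_of_injOn hinjM]
    _ = ((f '' Sp) ∪ (f '' Sm)).ncard := (Set.ncard_union_eq hdisj hfinP hfinM).symm
    _ ≤ (↑Target : Set (Finset ℕ)).ncard :=
        Set.ncard_le_ncard (Set.union_subset himgP himgM) Target.finite_toSet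
    _ = Target.card := Set.ncard_coe_finset Target
    _ = 2 ^ d.primeFactors.card - 2 := hTcard
end

section
/- If d is a positive even squarefree integer having exactly m distinct prime factors, where m ≥ 3, then M(d) ≤ 13 if m = 3, and M(d) ≤ 2^{m+1} + 7 − 4m if m ≥ 4. -/
lemma md_keyPow {A B p q : ℕ} (hA : 2 ≤ A) (hAB : A < B) (hp : 1 ≤ p) (hq : 1 ≤ q)
    (hpq : A ^ p = B ^ q)
    (hsq : ∀ r : ℕ, r.Prime → r ^ 2 ∣ A → r ^ 2 ∣ B → False) :
    ∃ y, 2 ≤ y ∧ B = A ^ y := by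
  have hA0 : A ≠ 0 := by omega
  have hB0 : B ≠ 0 := by omega
  have hf : ∀ r, p * A.factorization r = q * B.factorization r := by
    intro r
    have := congrArg (fun n => n.factorization r) hpq
    simpa [Nat.factorization_pow] using this
  have hqp : q < p := by
    by_contra hle
    push_neg at hle
    have h1 : A ^ p < B ^ p := Nat.pow_lt_pow_left hAB (by omega)
    have h2 : B ^ p ≤ B ^ q := Nat.pow_le_pow_right (by omega) hle
    omega
  have hprime : ∀ r, r.Prime → r ∣ A → A.factorization r = 1 := by
    intro r hr hrA
    have h1 : 0 < A.factorization r := hr.factorization_pos_of_dvd hA0 hrA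
    have h2 : A.factorization r < B.factorization r := by
      have : q * A.factorization r < q * B.factorization r := by
        rw [← hf r]
        exact Nat.mul_lt_mul_of_lt_of_le hqp (le_refl _) (by omega)
      exact Nat.lt_of_mul_lt_mul_left this
    have h3 : r ^ 2 ∣ B := (hr.pow_dvd_iff_le_factorization hB0).mpr (by omega)
    have h4 : ¬ r ^ 2 ∣ A := fun h => hsq r hr h h3
    have h5 : A.factorization r ≤ 1 := by
      by_contra h
      exact h4 ((hr.pow_dvd_iff_le_factorization hA0).mpr (by omega))
    omega
  obtain ⟨r₀, hr₀, hr₀A⟩ := Nat.exists_prime_and_dvd (show A ≠ 1 by omega)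
  have hpy : p = q * B.factorization r₀ := by
    have h := hf r₀
    rw [hprime r₀ hr₀ hr₀A, mul_one] at h
    exact h
  have hBA : B = A ^ B.factorization r₀ := by
    refine Nat.eq_of_factorization_eq hB0 (pow_ne_zero _ hA0) fun r => ?_
    rw [Nat.factorization_pow]
    simp only [Finsupp.smul_apply, smul_eq_mul]
    by_cases hr : r.Prime
    · by_cases hrA : r ∣ A
      · have h1 : A.factorization r = 1 := hprime r hr hrA
        have h2 := hf r
        rw [h1, mul_one] at h2
        rw [h1, mul_one]
        refine Nat.eq_of_mul_eq_mul_left (show 0 < q by omega) ?_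
        rw [← h2, ← hpy]
      · have h1 : A.factorization r = 0 := Nat.factorization_eq_zero_of_not_dvd hrA
        have h2 := hf r
        rw [h1, mul_zero] at h2
        rcases Nat.mul_eq_zero.mp h2.symm with h | h
        · omega
        · simp [h1, h]
    · simp [Nat.factorization_eq_zero_of_not_prime _ hr]
  refine ⟨B.factorization r₀, ?_, hBA⟩
  by_contra hy2
  push_neg at hy2
  interval_cases h : B.factorization r₀
  · simp at hBA; omega
  · simp at hBA; omega

lemma md_expRel {A B : ℕ} (hA : 2 ≤ A) (hB : 2 ≤ B) {k1 k2 : ℤ}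
    (hk : ¬(k1 = 0 ∧ k2 = 0)) (h : (A : ℚ) ^ k1 * (B : ℚ) ^ k2 = 1) :
    ∃ p q : ℕ, 1 ≤ p ∧ 1 ≤ q ∧ A ^ p = B ^ q := by
  have hA1 : (1 : ℚ) < (A : ℚ) := by exact_mod_cast hA
  have hB1 : (1 : ℚ) < (B : ℚ) := by exact_mod_cast hB
  have main : ∀ (X Y : ℕ), 2 ≤ X → 2 ≤ Y → (1:ℚ) < X → (1:ℚ) < Y → ∀ (u v : ℤ), 0 < u → v < 0 →
      (X : ℚ) ^ u * (Y : ℚ) ^ v = 1 → ∃ p q : ℕ, 1 ≤ p ∧ 1 ≤ q ∧ X ^ p = Y ^ q := by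
    intro X Y hX hY hX1 hY1 u v hu hv heq
    refine ⟨u.toNat, (-v).toNat, by omega, by omega, ?_⟩
    have h2 : (X : ℚ) ^ u = (Y : ℚ) ^ (-v) := by
      rw [zpow_neg]
      exact eq_inv_of_mul_eq_one_left (by linear_combination heq)
    rw [show u = (u.toNat : ℤ) by omega, show -v = ((-v).toNat : ℤ) by omega] at h2
    rw [zpow_natCast, zpow_natCast] at h2
    exact_mod_cast h2
  have hknz : k1 ≠ 0 ∧ k2 ≠ 0 := by
    constructor
    · rintro rfl
      rw [zpow_zero, one_mul] at h
      rcases lt_trichotomy k2 0 with hlt | hrfl | hgt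
      · have h1 : (1:ℚ) < (B:ℚ) ^ (-k2) := one_lt_zpow₀ hB1 (by omega)
        rw [zpow_neg, h, inv_one] at h1
        exact absurd h1 (by norm_num)
      · exact hk ⟨rfl, hrfl⟩
      · have h1 : (1:ℚ) < (B:ℚ) ^ k2 := one_lt_zpow₀ hB1 hgt
        rw [h] at h1
        exact absurd h1 (by norm_num)
    · rintro rfl
      rw [zpow_zero, mul_one] at h
      rcases lt_trichotomy k1 0 with hlt | hrfl | hgt
      · have h1 : (1:ℚ) < (A:ℚ) ^ (-k1) := one_lt_zpow₀ hA1 (by omega)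
        rw [zpow_neg, h, inv_one] at h1
        exact absurd h1 (by norm_num)
      · exact hk ⟨hrfl, rfl⟩
      · have h1 : (1:ℚ) < (A:ℚ) ^ k1 := one_lt_zpow₀ hA1 hgt
        rw [h] at h1
        exact absurd h1 (by norm_num)
  obtain ⟨hk1, hk2⟩ := hknz
  rcases lt_trichotomy k1 0 with h1 | h1 | h1
  · rcases lt_trichotomy k2 0 with h2 | h2 | h2
    · exfalso
      have ha : (A:ℚ) ^ k1 < 1 := by
        rw [show k1 = -(-k1) by ring, zpow_neg, inv_lt_one_iff₀]
        right
        exact one_lt_zpow₀ hA1 (by omega)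
      have hb : (B:ℚ) ^ k2 < 1 := by
        rw [show k2 = -(-k2) by ring, zpow_neg, inv_lt_one_iff₀]
        right
        exact one_lt_zpow₀ hB1 (by omega)
      have hpa : (0:ℚ) < (A:ℚ) ^ k1 := zpow_pos (by positivity) _
      have hpb : (0:ℚ) < (B:ℚ) ^ k2 := zpow_pos (by positivity) _
      nlinarith
    · omega
    · obtain ⟨p, q, hp, hq, hpq⟩ :=
        main B A hB hA hB1 hA1 k2 k1 h2 h1 (by rw [mul_comm]; exact h)
      exact ⟨q, p, hq, hp, hpq.symm⟩
  · omega
  · rcases lt_trichotomy k2 0 with h2 | h2 | h2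
    · exact main A B hA hB hA1 hB1 k1 k2 h1 h2 h
    · omega
    · exfalso
      have ha : (1:ℚ) < (A:ℚ) ^ k1 := one_lt_zpow₀ hA1 h1
      have hb : (1:ℚ) < (B:ℚ) ^ k2 := one_lt_zpow₀ hB1 h2
      nlinarith


lemma md_smallCard (d m : ℕ) (hd3 : 3 ≤ d) (hsf : Squarefree d)
    (hm : d.primeFactors.card = m) (Sq : Finset ℕ)
    (hmem : ∀ g ∈ Sq, g ∣ d ∧ 2 ≤ g ∧ g ^ 2 ≤ d + g) :
    2 * Sq.card ≤ 2 ^ m := by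
  classical
  have hdne : d ≠ 0 := by omega
  have hdnotin : ∀ g ∈ Sq, g ≠ d := by
    intro g hg hgd
    obtain ⟨-, h2, h3⟩ := hmem g hg
    subst hgd
    nlinarith [sq_nonneg g]
  set T := Sq.image (fun g => d / g) with hT
  have hTcard : T.card = Sq.card := by
    rw [hT]
    apply Finset.card_image_of_injOn
    intro g1 h1 g2 h2 he
    have d1 := (hmem g1 h1).1
    have d2 := (hmem g2 h2).1
    have e1 : d / (d / g1) = g1 := Nat.div_div_self d1 hdne
    have e2 : d / (d / g2) = g2 := Nat.div_div_self d2 hdne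
    simp only at he
    rw [← e1, ← e2, he]
  have hTmem : ∀ t ∈ T, ∃ g ∈ Sq, d / g = t := by
    intro t ht
    rw [hT, Finset.mem_image] at ht
    obtain ⟨g, hg, hgt⟩ := ht
    exact ⟨g, hg, hgt⟩
  have hsub2 : Sq ∪ T ⊆ (d.divisors.erase 1).erase d := by
    intro x hx
    rw [Finset.mem_union] at hx
    rw [Finset.mem_erase, Finset.mem_erase, Nat.mem_divisors]
    rcases hx with hx | hx
    · obtain ⟨h1, h2, h3⟩ := hmem x hx
      exact ⟨hdnotin x hx, by omega, h1, hdne⟩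
    · obtain ⟨g, hg, hgt⟩ := hTmem x hx
      obtain ⟨hg1, hg2, hg3⟩ := hmem g hg
      have hxd : x ∣ d := by rw [← hgt]; exact Nat.div_dvd_of_dvd hg1
      have hback : d / (d / g) = g := Nat.div_div_self hg1 hdne
      refine ⟨?_, ?_, hxd, hdne⟩
      · intro hxe
        rw [hxe] at hgt
        rw [hgt, Nat.div_self (by omega)] at hback
        omega
      · intro hxe
        rw [hxe] at hgt
        rw [hgt, Nat.div_one] at hback
        exact hdnotin g hg hback.symm
  -- each member of Sq ∩ T gives consecutive pair
  have hpair : ∀ g ∈ Sq, d / g ∈ Sq → ∃ c, c * (c + 1) = d ∧ (g = c ∨ g = c + 1) := by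
    intro g hg hg'
    obtain ⟨hg1, hg2, hg3⟩ := hmem g hg
    obtain ⟨hh1, hh2, hh3⟩ := hmem (d / g) hg'
    have hgh : g * (d / g) = d := Nat.mul_div_cancel' hg1
    have hne : g ≠ d / g := by
      intro hge
      have hdvd : g * g ∣ d := by
        rw [← hgh, ← hge]
      have : IsUnit g := hsf g hdvd
      rw [Nat.isUnit_iff] at this
      omega
    rcases Nat.lt_or_ge g (d / g) with hlt | hge
    · have hmul : (d / g) * (d / g) ≤ (g + 1) * (d / g) := by
        nlinarith [hh3, hgh, sq (d / g)]
      have hle : d / g ≤ g + 1 := Nat.le_of_mul_le_mul_right hmul (by omega)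
      have heq : d / g = g + 1 := by omega
      exact ⟨g, by rw [← heq]; exact hgh, Or.inl rfl⟩
    · have hlt : d / g < g := by omega
      have hmul : g * g ≤ (d / g + 1) * g := by
        nlinarith [hg3, hgh, sq g]
      have hle : g ≤ d / g + 1 := Nat.le_of_mul_le_mul_right hmul (by omega)
      have heq : g = d / g + 1 := by omega
      exact ⟨d / g, by rw [← heq, mul_comm]; exact hgh, Or.inr heq⟩
  have hcapmem : ∀ e ∈ Sq ∩ T, ∃ c, c * (c + 1) = d ∧ (e = c ∨ e = c + 1) := by
    intro e he
    rw [Finset.mem_inter] at he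
    obtain ⟨he1, he2⟩ := he
    obtain ⟨g, hg, hgt⟩ := hTmem e he2
    have hg1 := (hmem g hg).1
    have : d / e = g := by rw [← hgt, Nat.div_div_self hg1 hdne]
    apply hpair e he1
    rw [this]
    exact hg
  have hconsec_uniq : ∀ c c' : ℕ, c * (c + 1) = d → c' * (c' + 1) = d → c = c' := by
    intro c c' h1 h2
    rcases Nat.lt_trichotomy c c' with h | h | h
    · nlinarith
    · exact h
    · nlinarith
  have hcap : (Sq ∩ T).card ≤ 2 := by
    rcases Finset.eq_empty_or_nonempty (Sq ∩ T) with he | ⟨e₀, he₀⟩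
    · rw [he]; simp
    · obtain ⟨c₀, hc₀, hc₀e⟩ := hcapmem e₀ he₀
      have hsubc : Sq ∩ T ⊆ {c₀, c₀ + 1} := by
        intro e he
        obtain ⟨c, hc, hce⟩ := hcapmem e he
        have := hconsec_uniq c c₀ hc hc₀
        subst this
        simp only [Finset.mem_insert, Finset.mem_singleton]
        tauto
      calc (Sq ∩ T).card ≤ ({c₀, c₀ + 1} : Finset ℕ).card := Finset.card_le_card hsubc
        _ ≤ 2 := Finset.card_insert_le _ _ |>.trans (by simp)
  have herase : ((d.divisors.erase 1).erase d).card = 2 ^ m - 2 := by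
    have h1 : (1 : ℕ) ∈ d.divisors := Nat.one_mem_divisors.mpr hdne
    have hd : d ∈ d.divisors.erase 1 :=
      Finset.mem_erase.mpr ⟨by omega, Nat.mem_divisors_self d hdne⟩
    rw [Finset.card_erase_of_mem hd, Finset.card_erase_of_mem h1]
    have hdiv : d.divisors.card = 2 ^ m := by
      rw [Nat.card_divisors hdne, ← hm]
      rw [Finset.prod_congr rfl (g := fun _ => 2) ?_, Finset.prod_const]
      intro p hp
      rw [Nat.mem_primeFactors] at hp
      have hle := hsf.natFactorization_le_one p
      have hge : 0 < d.factorization p := hp.1.factorization_pos_of_dvd hdne hp.2.1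
      show d.factorization p + 1 = 2
      omega
    omega
  have hbig : 2 ≤ 2 ^ m := by
    calc 2 = 2 ^ 1 := rfl
    _ ≤ 2 ^ m := by
      apply Nat.pow_le_pow_right (by omega)
      by_contra hh
      push_neg at hh
      interval_cases m
      · -- m = 0 : no prime factors, but d ≥ 3 squarefree has one
        obtain ⟨p, hp, hpd⟩ := Nat.exists_prime_and_dvd (show d ≠ 1 by omega)
        have : p ∈ d.primeFactors := Nat.mem_primeFactors.mpr ⟨hp, hpd, hdne⟩
        rw [Finset.card_eq_zero] at hm
        simp [hm] at this
  have hunion : (Sq ∪ T).card ≤ 2 ^ m - 2 :=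
    le_trans (Finset.card_le_card hsub2) (le_of_eq herase)
  have hkey := Finset.card_union_add_card_inter Sq T
  omega


lemma md_abs_zpow (a : ℚ) (k : ℤ) : |a ^ k| = |a| ^ k := map_zpow₀ absHom a k

lemma md_card5 {α : Type*} [DecidableEq α] (x1 x2 x3 x4 x5 : α) :
    ({x1, x2, x3, x4, x5} : Finset α).card ≤ 5 := by
  apply (Finset.card_insert_le _ _).trans
  have h4 : ({x2, x3, x4, x5} : Finset α).card ≤ 4 := by
    apply (Finset.card_insert_le _ _).trans
    have h3 : ({x3, x4, x5} : Finset α).card ≤ 3 := by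
      apply (Finset.card_insert_le _ _).trans
      have h2 : ({x4, x5} : Finset α).card ≤ 2 := by
        apply (Finset.card_insert_le _ _).trans
        simp
      omega
    omega
  omega

lemma md_four_mul (m : ℕ) (h : 4 ≤ m) : 4 * m ≤ 2 ^ m + 2 := by
  induction m with
  | zero => omega
  | succ n ih =>
    rcases Nat.lt_or_ge n 4 with hn | hn
    · have hn3 : n = 3 := by omega
      subst hn3
      norm_num
    · have h1 := ih hn
      have h2 : 2 ^ (n + 1) = 2 ^ n * 2 := pow_succ 2 n
      omega


theorem stmt13 (d m : ℕ) (hd : 0 < d) (heven : Even d) (hsf : Squarefree d)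
    (hm : d.primeFactors.card = m) (hm3 : 3 ≤ m) :
    (m = 3 → M (d : ℤ) ≤ 13) ∧
    (4 ≤ m → (M (d : ℤ) : ℤ) ≤ 2 ^ (m + 1) + 7 - 4 * m) := by
  classical
  have hdne : d ≠ 0 := by omega
  have hd3 : 3 ≤ d := by
    by_contra hh
    push_neg at hh
    interval_cases d
    · rw [Nat.primeFactors_one] at hm; simp at hm; omega
    · rw [Nat.Prime.primeFactors Nat.prime_two] at hm; simp at hm; omega
  have hd6 : d ≠ 6 := by
    rintro rfl
    have h6 : (6:ℕ).primeFactors = {2, 3} := by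
      rw [show (6:ℕ) = 2 * 3 by norm_num,
        Nat.primeFactors_mul (by norm_num) (by norm_num),
        Nat.Prime.primeFactors Nat.prime_two,
        Nat.Prime.primeFactors Nat.prime_three]
      rfl
    rw [h6] at hm
    rw [show ({2, 3} : Finset ℕ).card = 2 by rfl] at hm
    omega
  set Sm := d.divisors.filter (fun g => 2 ≤ g ∧ ∃ y, 2 ≤ y ∧ g ^ y = d + g) with hSm
  set Sp := d.divisors.filter (fun g => 2 ≤ g ∧ ∃ y, 2 ≤ y ∧ g ^ y + g = d) with hSp
  have hdisj : Disjoint Sm Sp := by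
    rw [Finset.disjoint_left]
    intro g hgm hgp
    rw [hSm, Finset.mem_filter] at hgm
    rw [hSp, Finset.mem_filter] at hgp
    obtain ⟨-, hg2, y, hy2, hy⟩ := hgm
    obtain ⟨-, -, z, hz2, hz⟩ := hgp
    have hdvd1 : g ^ 2 ∣ g ^ y := pow_dvd_pow g hy2
    have hdvd2 : g ^ 2 ∣ g ^ z := pow_dvd_pow g hz2
    have h2 : g ^ 2 ∣ g ^ y - g ^ z := Nat.dvd_sub hdvd1 hdvd2
    have h3 : g ^ y - g ^ z = 2 * g := by omega
    rw [h3, pow_two, mul_comm 2 g] at h2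
    have h4 : g ∣ 2 := (Nat.mul_dvd_mul_iff_left (show 0 < g by omega)).mp h2
    have hg2' : g = 2 := by
      have := Nat.le_of_dvd (by norm_num) h4
      omega
    subst hg2'
    rcases Nat.lt_or_ge z 3 with hz3 | hz3
    · have hzz : z = 2 := by omega
      subst hzz
      norm_num at hz
      -- d = 6
      have hy8 : 2 ^ y = 8 := by omega
      omega
    · have h8z : (8:ℕ) ∣ 2 ^ z := by
        have := pow_dvd_pow 2 hz3
        norm_num at this
        exact this
      have hz8 : 8 ≤ 2 ^ z := Nat.le_of_dvd (by positivity) h8z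
      have hy3 : 3 ≤ y := by
        by_contra hh
        push_neg at hh
        interval_cases y <;> omega
      have h8y : (8:ℕ) ∣ 2 ^ y := by
        have := pow_dvd_pow 2 hy3
        norm_num at this
        exact this
      omega
  have hSmem : ∀ g ∈ Sm ∪ Sp, g ∣ d ∧ 2 ≤ g ∧ g ^ 2 ≤ d + g := by
    intro g hg
    rw [Finset.mem_union] at hg
    rcases hg with hg | hg
    · rw [hSm, Finset.mem_filter, Nat.mem_divisors] at hg
      obtain ⟨⟨h1, -⟩, h2, y, hy2, hy⟩ := hg
      refine ⟨h1, h2, ?_⟩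
      calc g ^ 2 ≤ g ^ y := Nat.pow_le_pow_right (by omega) hy2
        _ = d + g := hy
    · rw [hSp, Finset.mem_filter, Nat.mem_divisors] at hg
      obtain ⟨⟨h1, -⟩, h2, y, hy2, hy⟩ := hg
      refine ⟨h1, h2, ?_⟩
      have : g ^ 2 ≤ g ^ y := Nat.pow_le_pow_right (by omega) hy2
      omega
  have hsmall : 2 * (Sm ∪ Sp).card ≤ 2 ^ m := md_smallCard d m hd3 hsf hm _ hSmem
  -- the enveloping finite set
  set S5 : Finset (ℤ × ℤ) :=
    {((1:ℤ), 1 + (d:ℤ)), (1 - (d:ℤ), 1), (-1, (d:ℤ) - 1), (-1 - (d:ℤ), -1),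
      (-(((d / 2 : ℕ)):ℤ), (((d / 2 : ℕ)):ℤ))} with hS5
  set F := ((((S5 ∪ Sm.image (fun g : ℕ => ((g:ℤ), (g:ℤ) + (d:ℤ))))
      ∪ Sm.image (fun g : ℕ => (-(g:ℤ) - (d:ℤ), -(g:ℤ))))
      ∪ Sp.image (fun g : ℕ => (-(g:ℤ), (d:ℤ) - (g:ℤ))))
      ∪ Sp.image (fun g : ℕ => ((g:ℤ) - (d:ℤ), (g:ℤ)))) with hF
  have hin1 : ∀ x : ℤ × ℤ, x ∈ S5 → x ∈ F := by
    intro x hx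
    rw [hF]
    exact Finset.mem_union_left _ (Finset.mem_union_left _
      (Finset.mem_union_left _ (Finset.mem_union_left _ hx)))
  have hin2 : ∀ g ∈ Sm, ((g:ℤ), (g:ℤ) + (d:ℤ)) ∈ F := by
    intro g hg
    rw [hF]
    exact Finset.mem_union_left _ (Finset.mem_union_left _
      (Finset.mem_union_left _ (Finset.mem_union_right _ (Finset.mem_image_of_mem _ hg))))
  have hin3 : ∀ g ∈ Sm, (-(g:ℤ) - (d:ℤ), -(g:ℤ)) ∈ F := by
    intro g hg
    rw [hF]
    exact Finset.mem_union_left _ (Finset.mem_union_left _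
      (Finset.mem_union_right _ (Finset.mem_image_of_mem _ hg)))
  have hin4 : ∀ g ∈ Sp, (-(g:ℤ), (d:ℤ) - (g:ℤ)) ∈ F := by
    intro g hg
    rw [hF]
    exact Finset.mem_union_left _ (Finset.mem_union_right _ (Finset.mem_image_of_mem _ hg))
  have hin5 : ∀ g ∈ Sp, ((g:ℤ) - (d:ℤ), (g:ℤ)) ∈ F := by
    intro g hg
    rw [hF]
    exact Finset.mem_union_right _ (Finset.mem_image_of_mem _ hg)
  -- main subset claim
  have hsubset : MSet (d:ℤ) ⊆ (↑F : Set (ℤ × ℤ)) := by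
    rintro ⟨a, b⟩ ⟨⟨hab, k, hk0, hk⟩, hba⟩
    refine Finset.mem_coe.mpr ?_
    have ha0 : a ≠ 0 := by rintro rfl; simp at hab
    have hb0 : b ≠ 0 := by rintro rfl; simp at hab
    set A := a.natAbs with hAdef
    set B := b.natAbs with hBdef
    by_cases hA1 : A = 1
    · rcases (show a = 1 ∨ a = -1 by omega) with h | h
      · have hb : b = 1 + (d:ℤ) := by omega
        rw [h, hb]
        exact hin1 _ (by rw [hS5]; simp)
      · have hb : b = (d:ℤ) - 1 := by omega
        rw [h, hb]
        exact hin1 _ (by rw [hS5]; simp)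
    by_cases hB1 : B = 1
    · rcases (show b = 1 ∨ b = -1 by omega) with h | h
      · have ha : a = 1 - (d:ℤ) := by omega
        rw [h, ha]
        exact hin1 _ (by rw [hS5]; simp)
      · have ha : a = -1 - (d:ℤ) := by omega
        rw [h, ha]
        exact hin1 _ (by rw [hS5]; simp)
    have hA2 : 2 ≤ A := by omega
    have hB2 : 2 ≤ B := by omega
    have habsa : ((A : ℕ) : ℚ) = |(a : ℚ)| := by
      rw [hAdef]; push_cast [Nat.cast_natAbs]; rfl
    have habsb : ((B : ℕ) : ℚ) = |(b : ℚ)| := by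
      rw [hBdef]; push_cast [Nat.cast_natAbs]; rfl
    have habs : (A:ℚ) ^ k.1 * (B:ℚ) ^ k.2 = 1 := by
      rw [habsa, habsb, ← md_abs_zpow, ← md_abs_zpow, ← abs_mul, hk, abs_one]
    have hknz : ¬(k.1 = 0 ∧ k.2 = 0) := by
      rintro ⟨h1, h2⟩
      exact hk0 (Prod.ext h1 h2)
    obtain ⟨p, q, hp, hq, hpq⟩ := md_expRel hA2 hB2 hknz habs
    have hsq : ∀ r : ℕ, r.Prime → r ^ 2 ∣ A → r ^ 2 ∣ B → False := by
      intro r hr hrA hrB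
      have h1 : ((r:ℤ))^2 ∣ a := by
        have : ((r ^ 2 : ℕ) : ℤ) ∣ a := Int.natCast_dvd.mpr hrA
        push_cast at this
        exact this
      have h2 : ((r:ℤ))^2 ∣ b := by
        have : ((r ^ 2 : ℕ) : ℤ) ∣ b := Int.natCast_dvd.mpr hrB
        push_cast at this
        exact this
      have h3 : ((r:ℤ))^2 ∣ (d:ℤ) := by
        rw [← hba]
        exact dvd_sub h2 h1
      have h4 : r ^ 2 ∣ d := by
        have : ((r ^ 2 : ℕ) : ℤ) ∣ (d:ℤ) := by push_cast; exact h3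
        exact_mod_cast this
      have h5 : IsUnit r := hsf r (by rwa [pow_two] at h4)
      rw [Nat.isUnit_iff] at h5
      exact hr.one_lt.ne' h5
    have hsq' : ∀ r : ℕ, r.Prime → r ^ 2 ∣ B → r ^ 2 ∣ A → False :=
      fun r hr h1 h2 => hsq r hr h2 h1
    rcases lt_trichotomy a 0 with hneg | hzero | hpos
    · rcases lt_trichotomy b 0 with hbneg | hbzero | hbpos
      · -- a < b < 0 : B < A, A = B + d
        have hBA : B < A := by omega
        obtain ⟨y, hy2, hAy⟩ := md_keyPow hB2 hBA hq hp hpq.symm hsq'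
        have hBd : B ∣ d := by
          have h1 : B ∣ A := hAy ▸ dvd_pow_self B (by omega)
          have h2 : A = B + d := by omega
          rw [h2] at h1
          exact (Nat.dvd_add_right (dvd_refl B)).mp h1
        have hBy : B ^ y = d + B := by omega
        have hmemSm : B ∈ Sm := by
          rw [hSm, Finset.mem_filter, Nat.mem_divisors]
          exact ⟨⟨hBd, hdne⟩, hB2, y, hy2, hBy⟩
        have h1 : a = -(B:ℤ) - (d:ℤ) := by omega
        have h2 : b = -(B:ℤ) := by omega
        rw [h1, h2]
        exact hin3 B hmemSm
      · exact absurd hbzero hb0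
      · -- a < 0 < b : A + B = d
        rcases lt_trichotomy A B with hAB | hAB | hAB
        · obtain ⟨y, hy2, hBy⟩ := md_keyPow hA2 hAB hp hq hpq hsq
          have hAd : A ∣ d := by
            have h1 : A ^ y + A = d := by omega
            exact h1 ▸ dvd_add (dvd_pow_self A (by omega)) (dvd_refl A)
          have hmemSp : A ∈ Sp := by
            rw [hSp, Finset.mem_filter, Nat.mem_divisors]
            exact ⟨⟨hAd, hdne⟩, hA2, y, hy2, by omega⟩
          have h1 : a = -(A:ℤ) := by omega
          have h2 : b = (d:ℤ) - (A:ℤ) := by omega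
          rw [h1, h2]
          exact hin4 A hmemSp
        · -- A = B : pair (-(d/2), d/2)
          have h1 : a = -(((d / 2 : ℕ)):ℤ) := by omega
          have h2 : b = (((d / 2 : ℕ)):ℤ) := by omega
          rw [h1, h2]
          exact hin1 _ (by rw [hS5]; simp)
        · obtain ⟨y, hy2, hAy⟩ := md_keyPow hB2 hAB hq hp hpq.symm hsq'
          have hBd : B ∣ d := by
            have h1 : B ^ y + B = d := by omega
            exact h1 ▸ dvd_add (dvd_pow_self B (by omega)) (dvd_refl B)
          have hmemSp : B ∈ Sp := by
            rw [hSp, Finset.mem_filter, Nat.mem_divisors]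
            exact ⟨⟨hBd, hdne⟩, hB2, y, hy2, by omega⟩
          have h1 : a = (B:ℤ) - (d:ℤ) := by omega
          have h2 : b = (B:ℤ) := by omega
          rw [h1, h2]
          exact hin5 B hmemSp
    · exact absurd hzero ha0
    · -- 0 < a < b
      have hAB : A < B := by omega
      obtain ⟨y, hy2, hBy⟩ := md_keyPow hA2 hAB hp hq hpq hsq
      have hAd : A ∣ d := by
        have h1 : A ∣ B := hBy ▸ dvd_pow_self A (by omega)
        have h2 : B = A + d := by omega
        rw [h2] at h1
        exact (Nat.dvd_add_right (dvd_refl A)).mp h1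
      have hAy : A ^ y = d + A := by omega
      have hmemSm : A ∈ Sm := by
        rw [hSm, Finset.mem_filter, Nat.mem_divisors]
        exact ⟨⟨hAd, hdne⟩, hA2, y, hy2, hAy⟩
      have h1 : a = (A:ℤ) := by omega
      have h2 : b = (A:ℤ) + (d:ℤ) := by omega
      rw [h1, h2]
      exact hin2 A hmemSm
  -- cardinality bound
  have hFcard : F.card ≤ 5 + 2 ^ m := by
    have h5 : S5.card ≤ 5 := by rw [hS5]; exact md_card5 _ _ _ _ _
    have hc1 : (Sm.image (fun g : ℕ => ((g:ℤ), (g:ℤ) + (d:ℤ)))).card ≤ Sm.card :=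
      Finset.card_image_le
    have hc2 : (Sm.image (fun g : ℕ => (-(g:ℤ) - (d:ℤ), -(g:ℤ)))).card ≤ Sm.card :=
      Finset.card_image_le
    have hc3 : (Sp.image (fun g : ℕ => (-(g:ℤ), (d:ℤ) - (g:ℤ)))).card ≤ Sp.card :=
      Finset.card_image_le
    have hc4 : (Sp.image (fun g : ℕ => ((g:ℤ) - (d:ℤ), (g:ℤ)))).card ≤ Sp.card :=
      Finset.card_image_le
    have hcup : Sm.card + Sp.card = (Sm ∪ Sp).card :=
      (Finset.card_union_of_disjoint hdisj).symm
    have hu1 := Finset.card_union_le (((S5 ∪ Sm.image (fun g : ℕ => ((g:ℤ), (g:ℤ) + (d:ℤ))))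
      ∪ Sm.image (fun g : ℕ => (-(g:ℤ) - (d:ℤ), -(g:ℤ))))
      ∪ Sp.image (fun g : ℕ => (-(g:ℤ), (d:ℤ) - (g:ℤ))))
      (Sp.image (fun g : ℕ => ((g:ℤ) - (d:ℤ), (g:ℤ))))
    have hu2 := Finset.card_union_le ((S5 ∪ Sm.image (fun g : ℕ => ((g:ℤ), (g:ℤ) + (d:ℤ))))
      ∪ Sm.image (fun g : ℕ => (-(g:ℤ) - (d:ℤ), -(g:ℤ))))
      (Sp.image (fun g : ℕ => (-(g:ℤ), (d:ℤ) - (g:ℤ))))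
    have hu3 := Finset.card_union_le (S5 ∪ Sm.image (fun g : ℕ => ((g:ℤ), (g:ℤ) + (d:ℤ))))
      (Sm.image (fun g : ℕ => (-(g:ℤ) - (d:ℤ), -(g:ℤ))))
    have hu4 := Finset.card_union_le S5 (Sm.image (fun g : ℕ => ((g:ℤ), (g:ℤ) + (d:ℤ))))
    rw [hF]
    omega
  have hMle : M (d:ℤ) ≤ 5 + 2 ^ m := by
    have h1 : M (d:ℤ) ≤ F.card := by
      rw [M]
      calc (MSet (d:ℤ)).ncard ≤ (↑F : Set (ℤ × ℤ)).ncard :=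
            Set.ncard_le_ncard hsubset F.finite_toSet
        _ = F.card := Set.ncard_coe_finset F
    omega
  constructor
  · rintro rfl
    norm_num at hMle
    omega
  · intro hm4
    have hnat := md_four_mul m hm4
    have h1 : (M (d:ℤ) : ℤ) ≤ 5 + 2 ^ m := by exact_mod_cast hMle
    have h2 : ((4 * m : ℕ) : ℤ) ≤ ((2 ^ m + 2 : ℕ) : ℤ) := by exact_mod_cast hnat
    push_cast at h2
    have h3 : (2:ℤ) ^ (m + 1) = 2 * 2 ^ m := by ring
    linarith
end
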